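/- arXiv:1805.01989 — 12 statements merged into one kernel-verified Lean document; each statement's English description precedes it below -/
import Mathlib

section
/- For a full-rank density operator ρ with spectral decomposition ρ = Σ_j p_j |ψ_j⟩⟨ψ_j|, the purity of coherence satisfies P_H(ρ) := Tr(H ρ² H ρ⁻¹) − Tr(ρ H²) = Σ_{j,k} ((p_j − p_k)²(p_j + p_k)/(2 p_j p_k)) |⟨ψ_j|H|ψ_k⟩|². -/
open Matrix BigOperators

/-- Matrix element ⟨v|A|w⟩. -/
noncomputable def matElem {n : Type*} [Fintype n] (v : n → ℂ)
    (A : Matrix n n ℂ) (w : n → ℂ) : ℂ :=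
  star v ⬝ᵥ A.mulVec w

/-- Energy variance ⟨ψ|H²|ψ⟩ − ⟨ψ|H|ψ⟩² of a (unit) vector ψ. -/
noncomputable def variance {n : Type*} [Fintype n] (H : Matrix n n ℂ) (v : n → ℂ) : ℝ :=
  (matElem v (H * H) v).re - ((matElem v H v).re) ^ 2

/-- Quantum Fisher information computed from a spectral decomposition
`ρ = ∑ j, p j • |ψ j⟩⟨ψ j|`; terms with `p j + p k = 0` are omitted. -/
noncomputable def QFI {ι : Type*} [Fintype ι] {n : Type*} [Fintype n]
    (p : ι → ℝ) (ψ : ι → n → ℂ) (H : Matrix n n ℂ) : ℝ :=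
  2 * ∑ j, ∑ k, if p j + p k = 0 then 0 else
    (p j - p k) ^ 2 / (p j + p k) * Complex.normSq (matElem (ψ j) H (ψ k))

/-- Outer product |v⟩⟨v| as a matrix. -/
noncomputable def outer {n : Type*} (v : n → ℂ) : Matrix n n ℂ :=
  fun i j => v i * star (v j)

/-- Purity of coherence P_H(ρ) = Tr(H ρ² H ρ⁻¹) − Tr(ρ H²) (for invertible ρ). -/
noncomputable def PoC {n : Type*} [Fintype n] [DecidableEq n]
    (H ρ : Matrix n n ℂ) : ℝ :=
  ((H * ρ ^ 2 * H * ρ⁻¹).trace - (ρ * H ^ 2).trace).re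

/-- Formula for the purity of coherence of a full-rank density operator
in terms of its spectral decomposition. -/
theorem poc_spectral_formula {d : ℕ}
    (H ρ : Matrix (Fin d) (Fin d) ℂ) (hH : H.IsHermitian)
    (p : Fin d → ℝ) (ψ : Fin d → Fin d → ℂ)
    (horth : ∀ i j, star (ψ i) ⬝ᵥ ψ j = if i = j then (1 : ℂ) else 0)
    (hp : ∀ j, 0 < p j) (hsum : ∑ j, p j = 1)
    (hρ : ρ = ∑ j, (p j : ℂ) • outer (ψ j)) :
    PoC H ρ = ∑ j, ∑ k,
      (p j - p k) ^ 2 * (p j + p k) / (2 * p j * p k) *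
        Complex.normSq (matElem (ψ j) H (ψ k)) := by
  classical
  set U : Matrix (Fin d) (Fin d) ℂ := Matrix.of (fun i j => ψ j i) with hUdef
  have hUHU : Uᴴ * U = 1 := by
    ext i j
    simpa [Matrix.mul_apply, Matrix.conjTranspose_apply, hUdef, Matrix.one_apply,
      dotProduct] using horth i j
  have hUUH : U * Uᴴ = 1 := mul_eq_one_comm.mp hUHU
  set D : Matrix (Fin d) (Fin d) ℂ := Matrix.diagonal (fun j => (p j : ℂ)) with hDdef
  set Dinv : Matrix (Fin d) (Fin d) ℂ := Matrix.diagonal (fun j => (p j : ℂ)⁻¹) with hDidef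
  have hp0 : ∀ j, (p j : ℂ) ≠ 0 := fun j => by
    exact_mod_cast Complex.ofReal_ne_zero.mpr (hp j).ne'
  have hρU : ρ = U * D * Uᴴ := by
    rw [hρ]
    ext i k
    simp [Matrix.mul_apply, Matrix.conjTranspose_apply, hUdef, hDdef, outer,
      Matrix.sum_apply, Matrix.diagonal, Finset.mul_sum]
    apply Finset.sum_congr rfl
    intro j _
    ring
  have hinv : ρ⁻¹ = U * Dinv * Uᴴ := by
    apply Matrix.inv_eq_right_inv
    rw [hρU]
    calc U * D * Uᴴ * (U * Dinv * Uᴴ)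
        = U * (D * ((Uᴴ * U) * (Dinv * Uᴴ))) := by
          simp only [Matrix.mul_assoc]
      _ = U * (D * Dinv) * Uᴴ := by rw [hUHU, Matrix.one_mul]; simp only [Matrix.mul_assoc]
      _ = 1 := by
          rw [hDdef, hDidef, Matrix.diagonal_mul_diagonal]
          simp [mul_inv_cancel₀, hp0, hUUH]
  set B : Matrix (Fin d) (Fin d) ℂ := Uᴴ * H * U with hBdef
  have hB : ∀ j k, B j k = matElem (ψ j) H (ψ k) := by
    intro j k
    simp [hBdef, hUdef, Matrix.mul_apply, Matrix.conjTranspose_apply, matElem,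
      dotProduct, Matrix.mulVec, Finset.mul_sum, Finset.sum_mul, mul_assoc]
  have hBherm : ∀ j k, B k j = starRingEnd ℂ (B j k) := by
    intro j k
    have h : Bᴴ = B := by
      rw [hBdef]
      simp only [Matrix.conjTranspose_mul, Matrix.conjTranspose_conjTranspose, hH.eq]
      simp only [Matrix.mul_assoc]
    have := congrFun (congrFun h k) j
    simpa [Matrix.conjTranspose_apply] using this.symm
  have hcancel : ∀ X : Matrix (Fin d) (Fin d) ℂ, X * Uᴴ * U = X := fun X => by
    rw [Matrix.mul_assoc, hUHU, Matrix.mul_one]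
  have hHU : H = U * B * Uᴴ := by
    rw [hBdef]
    simp only [← Matrix.mul_assoc]
    rw [hUUH, Matrix.one_mul, Matrix.mul_assoc, hUUH, Matrix.mul_one]
  have key1 : H * ρ ^ 2 * H * ρ⁻¹ = U * B * D * D * B * Dinv * Uᴴ := by
    rw [hinv, hHU, hρU, sq]
    simp only [← Matrix.mul_assoc, hcancel]
  have key2 : ρ * H ^ 2 = U * D * B * B * Uᴴ := by
    rw [hHU, hρU, sq]
    simp only [← Matrix.mul_assoc, hcancel]
  have tr1 : (H * ρ ^ 2 * H * ρ⁻¹).trace = (B * D * D * B * Dinv).trace := by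
    rw [key1, Matrix.trace_mul_comm]
    simp only [← Matrix.mul_assoc, hUHU]
    rw [Matrix.one_mul]
  have tr2 : (ρ * H ^ 2).trace = (D * B * B).trace := by
    rw [key2, Matrix.trace_mul_comm]
    simp only [← Matrix.mul_assoc, hUHU]
    rw [Matrix.one_mul]
  have e1 : (B * D * D * B * Dinv).trace = ∑ j, ∑ k, B j k * (p k : ℂ) * (p k : ℂ) * B k j * ((p j : ℂ))⁻¹ := by
    simp [Matrix.trace, Matrix.diag, Matrix.mul_apply, hDdef, hDidef, Matrix.diagonal_apply,
      ite_mul, mul_ite, mul_zero, zero_mul, Finset.sum_ite_eq, Finset.sum_ite_eq',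
      Finset.sum_mul, Finset.mul_sum]
  have e2 : (D * B * B).trace = ∑ j, ∑ k, (p j : ℂ) * (B j k * B k j) := by
    simp [Matrix.trace, Matrix.diag, Matrix.mul_apply, hDdef, Matrix.diagonal_apply,
      ite_mul, mul_ite, mul_zero, zero_mul, Finset.sum_ite_eq, Finset.sum_ite_eq',
      Finset.sum_mul, Finset.mul_sum, mul_assoc]
  have hterm1 : ∀ j k : Fin d, B j k * (p k : ℂ) * (p k : ℂ) * B k j * ((p j : ℂ))⁻¹
      = (((p k)^2 * (p j)⁻¹ * Complex.normSq (B j k) : ℝ) : ℂ) := by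
    intro j k
    rw [hBherm j k]
    rw [show B j k * (p k : ℂ) * (p k : ℂ) * (starRingEnd ℂ) (B j k) * ((p j : ℂ))⁻¹
        = (p k : ℂ) * (p k : ℂ) * ((p j : ℂ))⁻¹ * (B j k * (starRingEnd ℂ) (B j k)) by ring]
    rw [Complex.mul_conj]
    push_cast
    ring
  have hterm2 : ∀ j k : Fin d, (p j : ℂ) * (B j k * B k j)
      = ((p j * Complex.normSq (B j k) : ℝ) : ℂ) := by
    intro j k
    rw [hBherm j k, Complex.mul_conj]
    push_cast
    ring
  have hPoC : PoC H ρ = ∑ j, ∑ k, ((p k)^2 * (p j)⁻¹ - p j) * Complex.normSq (B j k) := by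
    unfold PoC
    rw [tr1, tr2, e1, e2]
    simp only [hterm1, hterm2, ← Complex.ofReal_sum, ← Complex.ofReal_sub, Complex.ofReal_re,
      ← Finset.sum_sub_distrib]
    apply Finset.sum_congr rfl; intro j _
    apply Finset.sum_congr rfl; intro k _
    ring
  -- symmetrization
  have hn : ∀ j k, Complex.normSq (B j k) = Complex.normSq (B k j) := by
    intro j k; rw [hBherm j k, Complex.normSq_conj]
  have hswap : (∑ j, ∑ k, ((p k)^2 * (p j)⁻¹ - p j) * Complex.normSq (B j k))
      = ∑ j, ∑ k, ((p j)^2 * (p k)⁻¹ - p k) * Complex.normSq (B j k) := by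
    rw [Finset.sum_comm]
    apply Finset.sum_congr rfl; intro j _
    apply Finset.sum_congr rfl; intro k _
    rw [hn j k]
  rw [hPoC]
  have : (∑ j, ∑ k, ((p k)^2 * (p j)⁻¹ - p j) * Complex.normSq (B j k))
      = (1/2) * ((∑ j, ∑ k, ((p k)^2 * (p j)⁻¹ - p j) * Complex.normSq (B j k))
        + ∑ j, ∑ k, ((p j)^2 * (p k)⁻¹ - p k) * Complex.normSq (B j k)) := by
    rw [← hswap]; ring
  rw [this]
  simp only [Finset.mul_sum, ← Finset.sum_add_distrib]
  apply Finset.sum_congr rfl; intro j _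
  apply Finset.sum_congr rfl; intro k _
  rw [← hB j k]
  have hpj := (hp j).ne'
  have hpk := (hp k).ne'
  field_simp
  ring
end

section
/- The purity of coherence of a full-rank density operator is nonnegative, and it is zero if and only if ρ commutes with H. -/
open Matrix BigOperators
open scoped ComplexOrder

/-!
With `K = Hρ - ρH`, cycling the trace turns `P_H(ρ)` into `Tr(K ρ⁻¹ Kᴴ)`, using
`Kᴴ = ρH - Hρ` for Hermitian `H` and `ρ`. Since `ρ⁻¹` is positive definite, `K ρ⁻¹ Kᴴ` is
positive semidefinite, so its trace is nonnegative and vanishes only when `K ρ⁻¹ Kᴴ = 0`,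
i.e. only when `K = 0`.
-/

namespace Matrix

variable {n R : Type*} [Fintype n]

theorem trace_commutator_mul_inv_mul_commutator [DecidableEq n] [CommRing R]
    {H ρ : Matrix n n R} (hρ : IsUnit ρ.det) :
    ((H * ρ - ρ * H) * ρ⁻¹ * (ρ * H - H * ρ)).trace =
      (H * ρ ^ 2 * H * ρ⁻¹).trace - (ρ * H ^ 2).trace := by
  have hexpand : (H * ρ - ρ * H) * ρ⁻¹ * (ρ * H - H * ρ) =
      H * ρ * H - H * H * ρ - ρ * H * H + ρ * H * ρ⁻¹ * H * ρ := by
    simp only [sub_mul, mul_sub, Matrix.mul_assoc, mul_nonsing_inv_cancel_left _ _ hρ,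
      nonsing_inv_mul_cancel_left _ _ hρ]
    abel
  have h₁ : (H * ρ * H).trace = (ρ * H ^ 2).trace := by
    rw [trace_mul_comm, ← Matrix.mul_assoc, trace_mul_comm (H * H) ρ, pow_two]
  have h₂ : (H * H * ρ).trace = (ρ * H ^ 2).trace := by
    rw [trace_mul_comm (H * H) ρ, pow_two]
  have h₃ : (ρ * H * H).trace = (ρ * H ^ 2).trace := by
    rw [pow_two, Matrix.mul_assoc]
  have h₄ : (ρ * H * ρ⁻¹ * H * ρ).trace = (H * ρ ^ 2 * H * ρ⁻¹).trace :=
    calc (ρ * H * ρ⁻¹ * H * ρ).trace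
        = (ρ * (ρ * H * ρ⁻¹ * H)).trace := trace_mul_comm _ _
      _ = (ρ * ρ * H * ρ⁻¹ * H).trace := by simp only [Matrix.mul_assoc]
      _ = (H * (ρ * ρ * H * ρ⁻¹)).trace := trace_mul_comm _ _
      _ = (H * ρ ^ 2 * H * ρ⁻¹).trace := by simp only [pow_two, Matrix.mul_assoc]
  rw [hexpand, trace_add, trace_sub, trace_sub, h₁, h₂, h₃, h₄]
  ring

theorem PosDef.mul_mul_conjTranspose_same_eq_zero_iff [CommRing R] [PartialOrder R] [StarRing R]
    {A : Matrix n n R} (hA : A.PosDef) {m : Type*} {B : Matrix m n R} :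
    B * A * Bᴴ = 0 ↔ B = 0 := by
  refine ⟨fun h => ?_, fun h => by simp [h]⟩
  funext i
  by_contra hBi
  have hdiag : B i ⬝ᵥ (A *ᵥ star (B i)) = (B * A * Bᴴ) i i := by
    simp only [mul_apply, dotProduct, mulVec, conjTranspose_apply, Pi.star_apply,
      Finset.sum_mul, Finset.mul_sum, mul_assoc]
    exact Finset.sum_comm
  simpa [hdiag, h] using hA.dotProduct_mulVec_pos (star_ne_zero.mpr hBi)

end Matrix

theorem poc_nonneg_and_eq_zero_iff_commute_general {d : ℕ}
    (H ρ : Matrix (Fin d) (Fin d) ℂ) (hH : H.IsHermitian)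
    (hρ : ρ.PosDef) :
    0 ≤ PoC H ρ ∧ (PoC H ρ = 0 ↔ ρ * H = H * ρ) := by
  set K := H * ρ - ρ * H
  have hK : Kᴴ = ρ * H - H * ρ := by
    simp [K, conjTranspose_sub, conjTranspose_mul, hH.eq, hρ.isHermitian.eq]
  have hdet : IsUnit ρ.det := (isUnit_iff_isUnit_det ρ).mp hρ.isUnit
  have hPoC : PoC H ρ = (K * ρ⁻¹ * Kᴴ).trace.re := by
    rw [PoC, hK, trace_commutator_mul_inv_mul_commutator hdet]
  have hpsd : (K * ρ⁻¹ * Kᴴ).PosSemidef := hρ.inv.posSemidef.mul_mul_conjTranspose_same K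
  obtain ⟨hre, him⟩ := Complex.nonneg_iff.mp hpsd.trace_nonneg
  refine ⟨hPoC ▸ hre, ?_⟩
  rw [hPoC, eq_comm (a := ρ * H), ← sub_eq_zero (a := H * ρ),
    ← hρ.inv.mul_mul_conjTranspose_same_eq_zero_iff, ← hpsd.trace_eq_zero_iff, Complex.ext_iff]
  simp [← him]

/-- The purity of coherence of a full-rank density operator is nonnegative,
and it is zero iff ρ commutes with H. -/
theorem poc_nonneg_and_eq_zero_iff_commute {d : ℕ}
    (H ρ : Matrix (Fin d) (Fin d) ℂ) (hH : H.IsHermitian)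
    (hρ : ρ.PosDef) (htr : ρ.trace = 1) :
    0 ≤ PoC H ρ ∧ (PoC H ρ = 0 ↔ ρ * H = H * ρ) :=
  poc_nonneg_and_eq_zero_iff_commute_general H ρ hH hρ
end

section
/- For any full-rank density operator ρ, the purity of coherence dominates the quantum Fisher information: P_H(ρ) ≥ F_H(ρ). More precisely, with spectral decomposition ρ = Σ_j p_j |ψ_j⟩⟨ψ_j|, one has P_H(ρ) − F_H(ρ) = Σ_{j,k} ((p_j − p_k)⁴/(2 p_j p_k (p_j + p_k))) |⟨ψ_j|H|ψ_k⟩|² ≥ 0. -/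
set_option linter.unusedSectionVars false
set_option linter.unusedVariables false
set_option maxHeartbeats 1000000


open Matrix BigOperators

noncomputable def rk {n : Type*} (v w : n → ℂ) : Matrix n n ℂ :=
  Matrix.of fun i j => v i * star (w j)

section
variable {n : Type*} [Fintype n] [DecidableEq n]

lemma mul_rk (A : Matrix n n ℂ) (v w : n → ℂ) : A * rk v w = rk (A.mulVec v) w := by
  ext i j
  simp [rk, Matrix.mul_apply, Matrix.mulVec, dotProduct, Finset.sum_mul, mul_assoc]

lemma rk_mul (A : Matrix n n ℂ) (v w : n → ℂ) : rk v w * A = rk v (Aᴴ.mulVec w) := by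
  ext i j
  simp only [rk, Matrix.mul_apply, Matrix.of_apply, Matrix.mulVec, dotProduct,
    Matrix.conjTranspose_apply, star_sum, star_mul', star_star, Finset.mul_sum]
  exact Finset.sum_congr rfl fun k _ => by ring

lemma rk_mul_rk (v w x y : n → ℂ) : rk v w * rk x y = (star w ⬝ᵥ x) • rk v y := by
  ext i j
  simp only [rk, Matrix.mul_apply, Matrix.of_apply, dotProduct, Matrix.smul_apply,
    Finset.sum_mul, smul_eq_mul, Pi.star_apply]
  exact Finset.sum_congr rfl fun k _ => by ring

lemma trace_rk (v w : n → ℂ) : (rk v w).trace = star w ⬝ᵥ v := by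
  simp [rk, Matrix.trace, Matrix.diag, dotProduct, mul_comm]

lemma star_dot (a b : n → ℂ) : star (star a ⬝ᵥ b) = star b ⬝ᵥ a := by
  simp [dotProduct, mul_comm]

end

lemma complete {d : ℕ} (ψ : Fin d → Fin d → ℂ)
    (horth : ∀ i j, star (ψ i) ⬝ᵥ ψ j = if i = j then (1 : ℂ) else 0) :
    (∑ j, rk (ψ j) (ψ j)) = 1 := by
  set U : Matrix (Fin d) (Fin d) ℂ := Matrix.of fun i j => ψ j i with hU
  have h1 : Uᴴ * U = 1 := by
    ext j k
    simpa [Matrix.mul_apply, Matrix.conjTranspose_apply, hU, dotProduct,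
      Matrix.one_apply] using horth j k
  have h2 : U * Uᴴ = 1 := mul_eq_one_comm.mp h1
  rw [← h2]
  ext i k
  simp [rk, Matrix.mul_apply, Matrix.sum_apply, hU, Matrix.conjTranspose_apply]

lemma collapse {d : ℕ} (ψ : Fin d → Fin d → ℂ)
    (horth : ∀ i j, star (ψ i) ⬝ᵥ ψ j = if i = j then (1 : ℂ) else 0)
    (a b : Fin d → ℂ) :
    (∑ j, a j • rk (ψ j) (ψ j)) * (∑ k, b k • rk (ψ k) (ψ k))
      = ∑ j, (a j * b j) • rk (ψ j) (ψ j) := by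
  rw [Finset.sum_mul_sum]
  simp only [smul_mul_assoc, mul_smul_comm, rk_mul_rk, horth, smul_smul, ite_smul,
    one_smul, zero_smul, smul_ite, smul_zero]
  simp [Finset.sum_ite_eq, mul_comm]

lemma antisym_sum_zero {d : ℕ} (c nn : Fin d → Fin d → ℝ)
    (hc : ∀ j k, c j k = - c k j) (hn : ∀ j k, nn j k = nn k j) :
    ∑ j, ∑ k, c j k * nn j k = 0 := by
  have key : ∀ j k : Fin d, c j k * nn j k = -(c k j * nn k j) := fun j k => by
    rw [hc j k, hn j k]; ring
  have h2 : (∑ j, ∑ k, c j k * nn j k) = -(∑ j, ∑ k, c j k * nn j k) := by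
    nth_rewrite 1 [Finset.sum_comm]
    calc (∑ k, ∑ j, c j k * nn j k) = ∑ k, ∑ j, -(c k j * nn k j) :=
          Finset.sum_congr rfl fun k _ => Finset.sum_congr rfl fun j _ => key j k
      _ = -(∑ k, ∑ j, c k j * nn k j) := by simp
  linarith

/-- The purity of coherence dominates the quantum Fisher information, with the
explicit nonnegative difference. -/
theorem poc_sub_qfi {d : ℕ}
    (H ρ : Matrix (Fin d) (Fin d) ℂ) (hH : H.IsHermitian)
    (p : Fin d → ℝ) (ψ : Fin d → Fin d → ℂ)
    (horth : ∀ i j, star (ψ i) ⬝ᵥ ψ j = if i = j then (1 : ℂ) else 0)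
    (hp : ∀ j, 0 < p j) (hsum : ∑ j, p j = 1)
    (hρ : ρ = ∑ j, (p j : ℂ) • outer (ψ j)) :
    PoC H ρ - QFI p ψ H = ∑ j, ∑ k,
      (p j - p k) ^ 4 / (2 * p j * p k * (p j + p k)) *
        Complex.normSq (matElem (ψ j) H (ψ k)) ∧
    QFI p ψ H ≤ PoC H ρ := by
  -- notation
  set m : Fin d → Fin d → ℂ := fun j k => matElem (ψ j) H (ψ k) with hm_def
  set nn : Fin d → Fin d → ℝ := fun j k => Complex.normSq (m j k) with hnn_def
  have hρ' : ρ = ∑ j, (p j : ℂ) • rk (ψ j) (ψ j) := hρ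
  -- hermitian symmetry of matrix elements
  have hHerm : ∀ j k, star (m j k) = m k j := by
    intro j k
    have hH' : ∀ i l, star (H i l) = H l i := fun i l => congrFun (congrFun hH l) i
    simp only [hm_def, matElem, dotProduct, Matrix.mulVec, star_sum, star_mul',
      star_star, Pi.star_apply, Finset.mul_sum]
    rw [Finset.sum_comm]
    exact Finset.sum_congr rfl fun l _ => Finset.sum_congr rfl fun i _ => by
      rw [hH' i l]; ring
  have hnsymm : ∀ j k, nn j k = nn k j := fun j k => by
    simp only [hnn_def, ← hHerm j k, RCLike.star_def, Complex.normSq_conj]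
  -- key matrix forms
  have hHsH : ∀ (a : Fin d → ℂ),
      H * (∑ j, a j • rk (ψ j) (ψ j)) * H = ∑ j, a j • rk (H *ᵥ ψ j) (H *ᵥ ψ j) := by
    intro a
    rw [Finset.mul_sum, Finset.sum_mul]
    exact Finset.sum_congr rfl fun j _ => by
      rw [mul_smul_comm, smul_mul_assoc, mul_rk, rk_mul, hH]
  have traceform : ∀ a b : Fin d → ℂ,
      ((∑ j, a j • rk (H *ᵥ ψ j) (H *ᵥ ψ j)) * (∑ k, b k • rk (ψ k) (ψ k))).trace
        = ∑ j, ∑ k, (a j * b k) * ((nn k j : ℝ) : ℂ) := by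
    intro a b
    rw [Finset.sum_mul_sum, Matrix.trace_sum]
    simp only [Matrix.trace_sum, smul_mul_assoc, mul_smul_comm, rk_mul_rk,
      Matrix.trace_smul, trace_rk, smul_eq_mul]
    refine Finset.sum_congr rfl fun j _ => Finset.sum_congr rfl fun k _ => ?_
    have h1 : star (H *ᵥ ψ j) ⬝ᵥ ψ k = star (m k j) := (star_dot (ψ k) (H *ᵥ ψ j)).symm
    have h2 : star (ψ k) ⬝ᵥ (H *ᵥ ψ j) = m k j := rfl
    have h3 : star (m k j) * m k j = ((nn k j : ℝ) : ℂ) := by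
      simp [hnn_def, Complex.normSq_eq_conj_mul_self, RCLike.star_def]
    rw [h1, h2, ← h3]
    ring
  -- inverse
  have hpne : ∀ j, (p j : ℂ) ≠ 0 := fun j => by
    exact_mod_cast ne_of_gt (hp j)
  have hσ : ρ⁻¹ = ∑ j, ((p j : ℂ))⁻¹ • rk (ψ j) (ψ j) := by
    apply Matrix.inv_eq_right_inv
    rw [hρ', collapse ψ horth]
    have : ∀ j : Fin d, (p j : ℂ) * (p j : ℂ)⁻¹ = 1 := fun j => mul_inv_cancel₀ (hpne j)
    simp only [this, one_smul]
    exact complete ψ horth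
  have hρ2 : ρ ^ 2 = ∑ j, ((p j : ℂ) * (p j : ℂ)) • rk (ψ j) (ψ j) := by
    rw [sq, hρ', collapse ψ horth]
  -- first trace
  have htr1 : (H * ρ ^ 2 * H * ρ⁻¹).trace
      = ∑ j, ∑ k, ((p j : ℂ) * (p j : ℂ) * (p k : ℂ)⁻¹) * ((nn k j : ℝ) : ℂ) := by
    rw [hρ2, hσ, hHsH, traceform]
  -- second trace
  have htr2 : (ρ * H ^ 2).trace = ∑ j, ∑ k, (p j : ℂ) * ((nn k j : ℝ) : ℂ) := by
    have : ρ * H ^ 2 = ρ * H * H := by rw [sq, mul_assoc]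
    rw [this, Matrix.trace_mul_comm, ← mul_assoc]
    have h4 : H * ρ * H = ∑ j, (p j : ℂ) • rk (H *ᵥ ψ j) (H *ᵥ ψ j) := by
      rw [hρ', hHsH]
    rw [← Matrix.mul_one (H * ρ * H), h4, ← complete ψ horth]
    have h5 : (∑ k, rk (ψ k) (ψ k)) = ∑ k, (1 : ℂ) • rk (ψ k) (ψ k) := by
      simp
    rw [h5, traceform]
    simp
  -- PoC as a real double sum
  have hre : ∀ (f : Fin d → Fin d → ℝ),
      (∑ j, ∑ k, ((f j k : ℝ) : ℂ)) = ((∑ j, ∑ k, f j k : ℝ) : ℂ) := by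
    intro f; push_cast; rfl
  have hPoC : PoC H ρ = ∑ j, ∑ k, (p k ^ 2 * (p j)⁻¹ - p k) * nn j k := by
    rw [PoC, htr1, htr2]
    have e1 : (∑ j, ∑ k, ((p j : ℂ) * (p j : ℂ) * (p k : ℂ)⁻¹) * ((nn k j : ℝ) : ℂ))
        = ((∑ j, ∑ k, (p j * p j * (p k)⁻¹) * nn k j : ℝ) : ℂ) := by
      rw [← hre]; push_cast; rfl
    have e2 : (∑ j, ∑ k, (p j : ℂ) * ((nn k j : ℝ) : ℂ))
        = ((∑ j, ∑ k, p j * nn k j : ℝ) : ℂ) := by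
      rw [← hre]; push_cast; rfl
    rw [e1, e2, ← Complex.ofReal_sub, Complex.ofReal_re]
    rw [← Finset.sum_sub_distrib]
    rw [Finset.sum_comm]
    refine Finset.sum_congr rfl fun j _ => ?_
    rw [← Finset.sum_sub_distrib]
    exact Finset.sum_congr rfl fun k _ => by ring
  -- QFI as double sum
  have hQFI : QFI p ψ H = ∑ j, ∑ k, (2 * ((p j - p k) ^ 2 / (p j + p k))) * nn j k := by
    rw [QFI, Finset.mul_sum]
    refine Finset.sum_congr rfl fun j _ => ?_
    rw [Finset.mul_sum]
    refine Finset.sum_congr rfl fun k _ => ?_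
    rw [if_neg (by have h1 := hp j; have h2 := hp k; intro h; linarith : ¬ (p j + p k = 0))]
    ring
  -- the antisymmetric coefficient
  set c : Fin d → Fin d → ℝ := fun j k =>
    (p k ^ 2 * (p j)⁻¹ - p k) - 2 * ((p j - p k) ^ 2 / (p j + p k))
      - (p j - p k) ^ 4 / (2 * p j * p k * (p j + p k)) with hc_def
  have hcanti : ∀ j k, c j k = - c k j := by
    intro j k
    have h1 := hp j
    have h2 := hp k
    rw [hc_def]
    simp only
    have hne1 : p j ≠ 0 := ne_of_gt h1
    have hne2 : p k ≠ 0 := ne_of_gt h2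
    have hne3 : p j + p k ≠ 0 := by positivity
    have hne4 : p k + p j ≠ 0 := by positivity
    field_simp
    ring
  have hzero : ∑ j, ∑ k, c j k * nn j k = 0 := antisym_sum_zero c nn hcanti hnsymm
  have comb : (∑ j, ∑ k, (p k ^ 2 * (p j)⁻¹ - p k) * nn j k)
      - (∑ j, ∑ k, (2 * ((p j - p k) ^ 2 / (p j + p k))) * nn j k)
      - (∑ j, ∑ k, (p j - p k) ^ 4 / (2 * p j * p k * (p j + p k)) * nn j k)
      = ∑ j, ∑ k, c j k * nn j k := by
    simp only [← Finset.sum_sub_distrib]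
    exact Finset.sum_congr rfl fun j _ => Finset.sum_congr rfl fun k _ => by
      rw [hc_def]; ring
  have hmain : PoC H ρ - QFI p ψ H
      = ∑ j, ∑ k, (p j - p k) ^ 4 / (2 * p j * p k * (p j + p k)) * nn j k := by
    rw [hPoC, hQFI]
    linarith [hzero, comb]
  have hT : 0 ≤ ∑ j, ∑ k, (p j - p k) ^ 4 / (2 * p j * p k * (p j + p k)) * nn j k := by
    refine Finset.sum_nonneg fun j _ => Finset.sum_nonneg fun k _ => ?_
    have h1 := hp j
    have h2 := hp k
    have : (0:ℝ) ≤ nn j k := Complex.normSq_nonneg _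
    have hd : (0:ℝ) ≤ (p j - p k) ^ 4 / (2 * p j * p k * (p j + p k)) := by
      apply div_nonneg (by positivity)
      positivity
    exact mul_nonneg hd this
  exact ⟨hmain, by linarith [hmain, hT]⟩
end

section
/- The purity of coherence is additive under tensor products: for full-rank density operators ρ₁, ρ₂ and the noninteracting total Hamiltonian H_tot = H₁ ⊗ I + I ⊗ H₂, one has P_{H_tot}(ρ₁ ⊗ ρ₂) = P_{H₁}(ρ₁) + P_{H₂}(ρ₂). -/
open Matrix BigOperators
open scoped ComplexOrder

open Kronecker in
/-- Additivity of the purity of coherence under tensor products with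
noninteracting Hamiltonian H₁ ⊗ I + I ⊗ H₂. -/
theorem poc_additive {d₁ d₂ : ℕ}
    (H₁ ρ₁ : Matrix (Fin d₁) (Fin d₁) ℂ) (H₂ ρ₂ : Matrix (Fin d₂) (Fin d₂) ℂ)
    (hH₁ : H₁.IsHermitian) (hH₂ : H₂.IsHermitian)
    (hρ₁ : ρ₁.PosDef) (hρ₂ : ρ₂.PosDef)
    (htr₁ : ρ₁.trace = 1) (htr₂ : ρ₂.trace = 1) :
    PoC (H₁ ⊗ₖ (1 : Matrix (Fin d₂) (Fin d₂) ℂ) +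
         (1 : Matrix (Fin d₁) (Fin d₁) ℂ) ⊗ₖ H₂) (ρ₁ ⊗ₖ ρ₂)
      = PoC H₁ ρ₁ + PoC H₂ ρ₂ := by
  have hd₁ : IsUnit ρ₁.det := isUnit_iff_ne_zero.mpr hρ₁.det_pos.ne'
  have hd₂ : IsUnit ρ₂.det := isUnit_iff_ne_zero.mpr hρ₂.det_pos.ne'
  have hinv₁ : ρ₁ ^ 2 * ρ₁⁻¹ = ρ₁ := by
    rw [pow_two, mul_assoc, mul_nonsing_inv _ hd₁, mul_one]
  have hinv₂ : ρ₂ ^ 2 * ρ₂⁻¹ = ρ₂ := by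
    rw [pow_two, mul_assoc, mul_nonsing_inv _ hd₂, mul_one]
  have hcyc₁ : (ρ₁ ^ 2 * H₁ * ρ₁⁻¹).trace = (ρ₁ * H₁).trace := by
    rw [trace_mul_cycle, pow_two, ← mul_assoc, nonsing_inv_mul _ hd₁, one_mul]
  have hcyc₂ : (ρ₂ ^ 2 * H₂ * ρ₂⁻¹).trace = (ρ₂ * H₂).trace := by
    rw [trace_mul_cycle, pow_two, ← mul_assoc, nonsing_inv_mul _ hd₂, one_mul]
  have hHinv₁ : H₁ * ρ₁ ^ 2 * ρ₁⁻¹ = H₁ * ρ₁ := by rw [mul_assoc, hinv₁]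
  have hHinv₂ : H₂ * ρ₂ ^ 2 * ρ₂⁻¹ = H₂ * ρ₂ := by rw [mul_assoc, hinv₂]
  -- the key complex identity
  have key :
      ((H₁ ⊗ₖ (1 : Matrix (Fin d₂) (Fin d₂) ℂ) + (1 : Matrix (Fin d₁) (Fin d₁) ℂ) ⊗ₖ H₂) *
          (ρ₁ ⊗ₖ ρ₂) ^ 2 *
          (H₁ ⊗ₖ (1 : Matrix (Fin d₂) (Fin d₂) ℂ) + (1 : Matrix (Fin d₁) (Fin d₁) ℂ) ⊗ₖ H₂) *
          (ρ₁ ⊗ₖ ρ₂)⁻¹).trace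
        - ((ρ₁ ⊗ₖ ρ₂) *
            (H₁ ⊗ₖ (1 : Matrix (Fin d₂) (Fin d₂) ℂ) + (1 : Matrix (Fin d₁) (Fin d₁) ℂ) ⊗ₖ H₂) ^ 2).trace
      = ((H₁ * ρ₁ ^ 2 * H₁ * ρ₁⁻¹).trace - (ρ₁ * H₁ ^ 2).trace)
        + ((H₂ * ρ₂ ^ 2 * H₂ * ρ₂⁻¹).trace - (ρ₂ * H₂ ^ 2).trace) := by
    have e1 : (H₁ ⊗ₖ (1 : Matrix (Fin d₂) (Fin d₂) ℂ) + (1 : Matrix (Fin d₁) (Fin d₁) ℂ) ⊗ₖ H₂) *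
          (ρ₁ ⊗ₖ ρ₂) ^ 2 *
          (H₁ ⊗ₖ (1 : Matrix (Fin d₂) (Fin d₂) ℂ) + (1 : Matrix (Fin d₁) (Fin d₁) ℂ) ⊗ₖ H₂) *
          (ρ₁ ⊗ₖ ρ₂)⁻¹
        = (H₁ * ρ₁ ^ 2 * H₁ * ρ₁⁻¹) ⊗ₖ (ρ₂ ^ 2 * ρ₂⁻¹)
          + (H₁ * ρ₁ ^ 2 * ρ₁⁻¹) ⊗ₖ (ρ₂ ^ 2 * H₂ * ρ₂⁻¹)
          + ((ρ₁ ^ 2 * H₁ * ρ₁⁻¹) ⊗ₖ (H₂ * ρ₂ ^ 2 * ρ₂⁻¹)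
          + (ρ₁ ^ 2 * ρ₁⁻¹) ⊗ₖ (H₂ * ρ₂ ^ 2 * H₂ * ρ₂⁻¹)) := by
      rw [inv_kronecker, pow_two, ← mul_kronecker_mul]
      simp only [add_mul, mul_add, ← mul_kronecker_mul, Matrix.one_mul, Matrix.mul_one, pow_two,
        Matrix.mul_assoc]
      abel
    have e2 : (ρ₁ ⊗ₖ ρ₂) *
          (H₁ ⊗ₖ (1 : Matrix (Fin d₂) (Fin d₂) ℂ) + (1 : Matrix (Fin d₁) (Fin d₁) ℂ) ⊗ₖ H₂) ^ 2
        = (ρ₁ * (H₁ * H₁)) ⊗ₖ ρ₂ + (ρ₁ * H₁) ⊗ₖ (ρ₂ * H₂)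
          + ((ρ₁ * H₁) ⊗ₖ (ρ₂ * H₂) + ρ₁ ⊗ₖ (ρ₂ * (H₂ * H₂))) := by
      rw [pow_two]
      simp only [add_mul, mul_add, ← mul_kronecker_mul, Matrix.one_mul, Matrix.mul_one,
        Matrix.mul_assoc]
    rw [e1, e2]
    have hinv₁' : ρ₁ * ρ₁ * ρ₁⁻¹ = ρ₁ := by rw [← pow_two]; exact hinv₁
    have hinv₂' : ρ₂ * ρ₂ * ρ₂⁻¹ = ρ₂ := by rw [← pow_two]; exact hinv₂
    have hHinv₁' : H₁ * (ρ₁ * ρ₁) * ρ₁⁻¹ = H₁ * ρ₁ := by rw [← pow_two]; exact hHinv₁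
    have hHinv₂' : H₂ * (ρ₂ * ρ₂) * ρ₂⁻¹ = H₂ * ρ₂ := by rw [← pow_two]; exact hHinv₂
    have hcyc₁' : (ρ₁ * ρ₁ * H₁ * ρ₁⁻¹).trace = (ρ₁ * H₁).trace := by rw [← pow_two]; exact hcyc₁
    have hcyc₂' : (ρ₂ * ρ₂ * H₂ * ρ₂⁻¹).trace = (ρ₂ * H₂).trace := by rw [← pow_two]; exact hcyc₂
    have c1 : (H₁ * ρ₁).trace = (ρ₁ * H₁).trace := trace_mul_comm _ _
    have c2 : (H₂ * ρ₂).trace = (ρ₂ * H₂).trace := trace_mul_comm _ _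
    simp only [pow_two, trace_add, trace_kronecker, hinv₁', hinv₂', hHinv₁', hHinv₂',
      hcyc₁', hcyc₂', htr₁, htr₂, c1, c2]
    ring
  unfold PoC
  rw [key, Complex.add_re]
end

section
/- For a qubit state ρ = p|ψ⟩⟨ψ| + (1−p)|ψ⊥⟩⟨ψ⊥| with 0 < p < 1 and ⟨ψ⊥|ψ⟩ = 0, the purity of coherence equals P_H(ρ) = ((1−2p)²/(p(1−p))) · V_H(ψ), where V_H(ψ) = ⟨ψ|H²|ψ⟩ − ⟨ψ|H|ψ⟩². -/
open Matrix BigOperators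

/-!
If `ρ = ∑ⱼ pⱼ |ψⱼ⟩⟨ψⱼ|` in an orthonormal basis, then `ρ²` and `ρ⁻¹` are diagonal in the same
basis, and after writing `Tr(ρH²) = Tr(HρH · ∑ₖ |ψₖ⟩⟨ψₖ|)` both traces in `P_H(ρ)` become weighted
sums of `|⟨ψⱼ|H|ψₖ⟩|²`: `P_H(ρ) = ∑ⱼₖ (pⱼ²/pₖ − pⱼ) |⟨ψⱼ|H|ψₖ⟩|²`. For a qubit with `q = 1 − p`
the diagonal terms vanish and the off-diagonal ones add up to
`(p²/q + q²/p − p − q) |⟨ψ|H|ψ⊥⟩|² = (p − q)²/(pq) |⟨ψ|H|ψ⊥⟩|²`, while completeness of the basis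
gives `V_H(ψ) = |⟨ψ|H|ψ⊥⟩|²`.
-/

def IsOrthonormal {ι n : Type*} [Fintype n] [DecidableEq ι] (ψ : ι → n → ℂ) : Prop :=
  ∀ j k, star (ψ j) ⬝ᵥ ψ k = if j = k then 1 else 0

section Outer

variable {n : Type*} [Fintype n]

lemma outer_mul_outer (v w : n → ℂ) :
    outer v * outer w = (star v ⬝ᵥ w) • vecMulVec v (star w) := by
  rw [show outer v = vecMulVec v (star v) from rfl, show outer w = vecMulVec w (star w) from rfl,
    vecMulVec_mul_vecMulVec, vecMulVec_smul]

lemma trace_mul_outer (A : Matrix n n ℂ) (v : n → ℂ) : (A * outer v).trace = matElem v A v := by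
  rw [show outer v = vecMulVec v (star v) from rfl, mul_vecMulVec, trace_vecMulVec,
    dotProduct_comm, matElem]

lemma trace_mul_outer_mul_outer (A B : Matrix n n ℂ) (v w : n → ℂ) :
    (A * outer v * B * outer w).trace = matElem w A v * matElem v B w := by
  have hmid : outer v * B * outer w = matElem v B w • vecMulVec v (star w) := by
    rw [show outer v = vecMulVec v (star v) from rfl, show outer w = vecMulVec w (star w) from rfl,
      vecMulVec_mul, vecMulVec_mul_vecMulVec, vecMulVec_smul, ← dotProduct_mulVec, matElem]
  rw [Matrix.mul_assoc A, Matrix.mul_assoc A, hmid, Matrix.mul_smul, mul_vecMulVec, trace_smul,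
    trace_vecMulVec, dotProduct_comm, smul_eq_mul, mul_comm]
  rfl

lemma star_matElem {H : Matrix n n ℂ} (hH : H.IsHermitian) (v w : n → ℂ) :
    star (matElem v H w) = matElem w H v := by
  rw [matElem, star_dotProduct, star_star, star_mulVec, hH.eq, ← dotProduct_mulVec, matElem]

lemma trace_mul_outer_mul_outer_of_isHermitian {H : Matrix n n ℂ} (hH : H.IsHermitian)
    (v w : n → ℂ) :
    (H * outer v * H * outer w).trace = Complex.normSq (matElem v H w) := by
  rw [trace_mul_outer_mul_outer, ← star_matElem hH, Complex.star_def, mul_comm,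
    Complex.mul_conj]

lemma trace_mul_sum_smul_outer_mul_sum_smul_outer {ι : Type*} [Fintype ι]
    {H : Matrix n n ℂ} (hH : H.IsHermitian) (ψ : ι → n → ℂ) (a b : ι → ℂ) :
    (H * (∑ j, a j • outer (ψ j)) * H * (∑ k, b k • outer (ψ k))).trace =
      ∑ j, ∑ k, a j * b k * Complex.normSq (matElem (ψ j) H (ψ k)) := by
  simp only [Matrix.sum_mul, Matrix.mul_smul, Matrix.smul_mul, trace_sum, trace_smul,
    smul_eq_mul, trace_mul_outer_mul_outer_of_isHermitian hH, Finset.mul_sum]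
  rw [Finset.sum_comm]
  exact Finset.sum_congr rfl fun j _ => Finset.sum_congr rfl fun k _ => by ring

end Outer

namespace IsOrthonormal

variable {n : Type*} [Fintype n] [DecidableEq n] {ψ : n → n → ℂ}

lemma outer_mul_outer (hψ : IsOrthonormal ψ) (j k : n) :
    outer (ψ j) * outer (ψ k) = if j = k then outer (ψ j) else 0 := by
  rw [_root_.outer_mul_outer, hψ]
  split_ifs with h
  · subst h
    rw [one_smul]
    rfl
  · rw [zero_smul]

lemma sum_smul_outer_mul_sum_smul_outer (hψ : IsOrthonormal ψ) (a b : n → ℂ) :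
    (∑ j, a j • outer (ψ j)) * (∑ k, b k • outer (ψ k)) = ∑ j, (a j * b j) • outer (ψ j) := by
  simp only [Matrix.sum_mul, Matrix.mul_sum, Matrix.smul_mul, Matrix.mul_smul,
    hψ.outer_mul_outer, smul_ite, smul_zero, Finset.sum_ite_eq', Finset.mem_univ, if_true,
    smul_smul, mul_comm (b _)]

lemma sum_outer_eq_one (hψ : IsOrthonormal ψ) : ∑ j, outer (ψ j) = 1 := by
  set U : Matrix n n ℂ := Matrix.of fun i j => ψ j i
  have hU : Uᴴ * U = 1 := by
    ext j k
    simpa [U, Matrix.mul_apply, dotProduct, Matrix.one_apply] using hψ j k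
  rw [← mul_eq_one_comm.mp hU]
  ext i i'
  simp [U, Matrix.mul_apply, outer, Matrix.sum_apply]

lemma inv_sum_smul_outer (hψ : IsOrthonormal ψ) {a : n → ℂ} (ha : ∀ j, a j ≠ 0) :
    (∑ j, a j • outer (ψ j))⁻¹ = ∑ j, (a j)⁻¹ • outer (ψ j) := by
  apply inv_eq_right_inv
  rw [hψ.sum_smul_outer_mul_sum_smul_outer]
  simp only [mul_inv_cancel₀ (ha _), one_smul, hψ.sum_outer_eq_one]

lemma PoC_sum_smul_outer {H : Matrix n n ℂ} (hH : H.IsHermitian) (hψ : IsOrthonormal ψ)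
    {p : n → ℝ} (hp : ∀ j, p j ≠ 0) :
    PoC H (∑ j, (p j : ℂ) • outer (ψ j)) =
      ∑ j, ∑ k, (p j ^ 2 / p k - p j) * Complex.normSq (matElem (ψ j) H (ψ k)) := by
  set ρ := ∑ j, (p j : ℂ) • outer (ψ j)
  have hsq : ρ ^ 2 = ∑ j, ((p j : ℂ) * p j) • outer (ψ j) := by
    rw [pow_two, hψ.sum_smul_outer_mul_sum_smul_outer]
  have hinv : ρ⁻¹ = ∑ j, (p j : ℂ)⁻¹ • outer (ψ j) :=
    hψ.inv_sum_smul_outer fun j => Complex.ofReal_ne_zero.mpr (hp j)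
  have hcycle : (ρ * H ^ 2).trace = (H * ρ * H * ∑ k, (1 : ℂ) • outer (ψ k)).trace := by
    rw [pow_two, ← Matrix.mul_assoc, trace_mul_cycle]
    simp only [one_smul, hψ.sum_outer_eq_one, Matrix.mul_one]
  rw [PoC, hcycle, hsq, hinv, trace_mul_sum_smul_outer_mul_sum_smul_outer hH,
    trace_mul_sum_smul_outer_mul_sum_smul_outer hH]
  simp only [← Finset.sum_sub_distrib, Complex.re_sum]
  refine Finset.sum_congr rfl fun j _ => Finset.sum_congr rfl fun k _ => ?_
  rw [← Complex.ofReal_re ((p j ^ 2 / p k - p j) * Complex.normSq (matElem (ψ j) H (ψ k)))]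
  push_cast
  ring_nf

lemma variance_eq {H : Matrix n n ℂ} (hH : H.IsHermitian) (hψ : IsOrthonormal ψ) (v : n → ℂ) :
    variance H v = ∑ k, Complex.normSq (matElem (ψ k) H v) - Complex.normSq (matElem v H v) := by
  have hsq : matElem v (H * H) v = ∑ k, Complex.normSq (matElem (ψ k) H v) := by
    calc matElem v (H * H) v = (H * (∑ k, outer (ψ k)) * H * outer v).trace := by
          rw [hψ.sum_outer_eq_one, Matrix.mul_one, trace_mul_outer]
      _ = _ := by
          simp only [Matrix.mul_sum, Matrix.sum_mul, trace_sum,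
            trace_mul_outer_mul_outer_of_isHermitian hH]
          push_cast
          rfl
  have him : (matElem v H v).im = 0 := hH.im_star_dotProduct_mulVec_self v
  rw [variance, hsq, Complex.ofReal_re, Complex.normSq_apply, him]
  ring

end IsOrthonormal

/-- Purity of coherence of a qubit state
ρ = p|ψ⟩⟨ψ| + (1−p)|ψ⊥⟩⟨ψ⊥|. -/
theorem poc_qubit {H ρ : Matrix (Fin 2) (Fin 2) ℂ} (hH : H.IsHermitian)
    {p : ℝ} (hp0 : 0 < p) (hp1 : p < 1)
    (ψ ψperp : Fin 2 → ℂ)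
    (hψ : star ψ ⬝ᵥ ψ = 1) (hψperp : star ψperp ⬝ᵥ ψperp = 1)
    (horth : star ψperp ⬝ᵥ ψ = 0)
    (hρ : ρ = (p : ℂ) • outer ψ + ((1 - p : ℝ) : ℂ) • outer ψperp) :
    PoC H ρ = (1 - 2 * p) ^ 2 / (p * (1 - p)) * variance H ψ := by
  set basis : Fin 2 → Fin 2 → ℂ := ![ψ, ψperp]
  set weight : Fin 2 → ℝ := ![p, 1 - p]
  have hq : 1 - p ≠ 0 := sub_ne_zero.mpr hp1.ne'
  have horth' : star ψ ⬝ᵥ ψperp = 0 := by rw [star_dotProduct, horth, star_zero]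
  have hbasis : IsOrthonormal basis := by
    intro j k
    fin_cases j <;> fin_cases k <;> simp [basis, hψ, hψperp, horth, horth']
  have hweight : ∀ j, weight j ≠ 0 := by
    intro j
    fin_cases j
    exacts [hp0.ne', hq]
  have hρ' : ρ = ∑ j, (weight j : ℂ) • outer (basis j) := by
    rw [hρ, Fin.sum_univ_two]
    rfl
  have hsymm : Complex.normSq (matElem ψperp H ψ) = Complex.normSq (matElem ψ H ψperp) := by
    rw [← star_matElem hH, Complex.star_def, Complex.normSq_conj]
  rw [hρ', hbasis.PoC_sum_smul_outer hH hweight, hbasis.variance_eq hH ψ]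
  simp only [Fin.sum_univ_two, Fin.isValue, cons_val_zero, cons_val_one, cons_val_fin_one,
    hsymm, add_sub_cancel_left, weight, basis]
  field_simp
  ring
end

section
/- For any full-rank qubit density operator ρ, the purity of coherence is determined by the Fisher information and the purity of the state: P_H(ρ) = F_H(ρ) / (2(1 − Tr(ρ²))). -/
open Matrix BigOperators

/- ### auxiliary lemmas -/

lemma aux_outer_mulVec {n : Type*} [Fintype n] (v w : n → ℂ) :
    (outer v).mulVec w = (star v ⬝ᵥ w) • v := by
  ext i
  simp [outer, Matrix.mulVec, dotProduct, Finset.sum_mul, Finset.mul_sum]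
  congr 1; ext j; ring

lemma aux_trace_mul_outer {n : Type*} [Fintype n] (M : Matrix n n ℂ) (v : n → ℂ) :
    (M * outer v).trace = matElem v M v := by
  simp [Matrix.trace, Matrix.mul_apply, outer, matElem, Matrix.mulVec, dotProduct,
    Matrix.diag, Finset.mul_sum]
  congr 1; ext i; congr 1; ext j; ring

lemma aux_matElem_HoH {n : Type*} [Fintype n] (H : Matrix n n ℂ) (v w : n → ℂ) :
    matElem w (H * outer v * H) w = matElem w H v * matElem v H w := by
  simp only [matElem, ← Matrix.mulVec_mulVec, aux_outer_mulVec, Matrix.mulVec_smul,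
    dotProduct_smul, smul_eq_mul]
  ring

lemma aux_star_matElem {n : Type*} [Fintype n] {H : Matrix n n ℂ} (hH : H.IsHermitian)
    (v w : n → ℂ) : star (matElem v H w) = matElem w H v := by
  have hstar : ∀ i j, star (H i j) = H j i := fun i j => by
    have := congrFun (congrFun hH.eq j) i
    simpa [Matrix.conjTranspose_apply] using this
  simp only [matElem, Matrix.mulVec, dotProduct, star_sum, star_mul', star_star, Pi.star_apply,
    Finset.mul_sum]
  rw [Finset.sum_comm]
  refine Finset.sum_congr rfl fun j _ => Finset.sum_congr rfl fun i _ => ?_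
  rw [hstar]; ring

lemma aux_matElem_sum {n ι : Type*} [Fintype n] [Fintype ι] (v w : n → ℂ)
    (M : ι → Matrix n n ℂ) :
    matElem v (∑ k, M k) w = ∑ k, matElem v (M k) w := by
  have hadd : ∀ A B : Matrix n n ℂ, matElem v (A + B) w = matElem v A w + matElem v B w := by
    intro A B; simp [matElem, Matrix.add_mulVec, dotProduct_add]
  exact map_sum (AddMonoidHom.mk' (fun A => matElem v A w) hadd) M Finset.univ

/-- For a full-rank qubit density operator,
P_H(ρ) = F_H(ρ) / (2(1 − Tr ρ²)). -/
theorem poc_eq_qfi_div_purity_qubit {H ρ : Matrix (Fin 2) (Fin 2) ℂ}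
    (hH : H.IsHermitian)
    (p : Fin 2 → ℝ) (ψ : Fin 2 → Fin 2 → ℂ)
    (horth : ∀ i j, star (ψ i) ⬝ᵥ ψ j = if i = j then (1 : ℂ) else 0)
    (hp : ∀ j, 0 < p j) (hsum : ∑ j, p j = 1)
    (hρ : ρ = ∑ j, (p j : ℂ) • outer (ψ j))
    (hpurity : ((ρ * ρ).trace).re < 1) :
    PoC H ρ = QFI p ψ H / (2 * (1 - ((ρ * ρ).trace).re)) := by
  -- entrywise product of outer projectors
  have hmulentry : ∀ j k i l, (outer (ψ j) * outer (ψ k)) i l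
      = ψ j i * star (ψ k l) * (star (ψ j) ⬝ᵥ ψ k) := fun j k i l => by
    simp only [Matrix.mul_apply, outer, dotProduct, Finset.mul_sum]
    exact Finset.sum_congr rfl fun m _ => by simp only [Pi.star_apply]; ring
  have houter : ∀ j k, outer (ψ j) * outer (ψ k)
      = if j = k then outer (ψ j) else 0 := fun j k => by
    ext i l
    rw [hmulentry, horth]
    by_cases hjk : j = k <;> simp [hjk, outer]
  -- completeness
  have hone : ∑ j, outer (ψ j) = (1 : Matrix (Fin 2) (Fin 2) ℂ) := by
    let U : Matrix (Fin 2) (Fin 2) ℂ := Matrix.of fun i j => ψ j i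
    have hUU : Uᴴ * U = 1 := by
      ext i j
      have h := horth i j
      simp only [dotProduct, Pi.star_apply] at h
      simp only [Matrix.mul_apply, Matrix.conjTranspose_apply, Matrix.of_apply, U,
        Matrix.one_apply]
      simpa using h
    have hUU' : U * Uᴴ = 1 := mul_eq_one_comm.mp hUU
    calc ∑ j, outer (ψ j) = U * Uᴴ := by
          ext i l
          simp [Matrix.mul_apply, Matrix.sum_apply, outer, U, Matrix.conjTranspose_apply]
      _ = 1 := hUU'
  -- squared state
  have hρ2 : ρ ^ 2 = ∑ j, (((p j) ^ 2 : ℝ) : ℂ) • outer (ψ j) := by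
    rw [pow_two, hρ]
    simp only [Finset.sum_mul, Matrix.smul_mul, Matrix.mul_sum, Matrix.mul_smul, houter,
      smul_ite, smul_zero, Finset.sum_ite_eq, Finset.mem_univ, if_true]
    refine Finset.sum_congr rfl fun j _ => ?_
    rw [smul_smul]
    push_cast
    ring_nf
  -- inverse state
  have hinv : ρ⁻¹ = ∑ j, (((p j)⁻¹ : ℝ) : ℂ) • outer (ψ j) := by
    refine Matrix.inv_eq_right_inv ?_
    rw [hρ]
    simp only [Finset.sum_mul, Matrix.smul_mul, Matrix.mul_sum, Matrix.mul_smul, houter,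
      smul_ite, smul_zero, Finset.sum_ite_eq, Finset.mem_univ, if_true]
    rw [← hone]
    refine Finset.sum_congr rfl fun j _ => ?_
    rw [smul_smul, ← Complex.ofReal_mul, inv_mul_cancel₀ (ne_of_gt (hp j)), Complex.ofReal_one,
      one_smul]
  -- ⟨k|H|j⟩⟨j|H|k⟩ = |⟨j|H|k⟩|²
  have hermN : ∀ j k, matElem (ψ k) H (ψ j) * matElem (ψ j) H (ψ k)
      = (Complex.normSq (matElem (ψ j) H (ψ k)) : ℂ) := fun j k => by
    rw [← aux_star_matElem hH (ψ j) (ψ k), Complex.star_def, mul_comm, Complex.mul_conj]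
  -- key trace computation
  have key : ∀ a b : Fin 2 → ℝ,
      (H * (∑ j, ((a j : ℝ) : ℂ) • outer (ψ j)) * H * (∑ k, ((b k : ℝ) : ℂ) • outer (ψ k))).trace
        = ((∑ j, ∑ k, (a j * b k) * Complex.normSq (matElem (ψ j) H (ψ k)) : ℝ) : ℂ) := by
    intro a b
    push_cast
    simp only [Matrix.mul_sum, Matrix.sum_mul, Matrix.mul_smul, Matrix.smul_mul,
      Matrix.trace_sum, Matrix.trace_smul, Finset.smul_sum]
    rw [Finset.sum_comm]
    refine Finset.sum_congr rfl fun j _ => Finset.sum_congr rfl fun k _ => ?_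
    rw [aux_trace_mul_outer, aux_matElem_HoH, hermN]
    simp only [smul_eq_mul]
    ring
  -- T1
  have hT1 : (H * ρ ^ 2 * H * ρ⁻¹).trace
      = ((∑ j, ∑ k, ((p j) ^ 2 * (p k)⁻¹) * Complex.normSq (matElem (ψ j) H (ψ k)) : ℝ) : ℂ) := by
    rw [hρ2, hinv]; exact key (fun j => (p j) ^ 2) (fun k => (p k)⁻¹)
  -- T2
  have hT2 : (ρ * H ^ 2).trace
      = ((∑ j, ∑ k, (p j) * Complex.normSq (matElem (ψ j) H (ψ k)) : ℝ) : ℂ) := by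
    have hH2 : H ^ 2 = ∑ k, H * outer (ψ k) * H := by
      calc H ^ 2 = H * (∑ k, outer (ψ k)) * H := by rw [hone, pow_two, Matrix.mul_one]
        _ = ∑ k, H * outer (ψ k) * H := by rw [Matrix.mul_sum, Matrix.sum_mul]
    rw [hρ]
    push_cast
    simp only [Finset.sum_mul, Matrix.smul_mul, Matrix.trace_sum, Matrix.trace_smul]
    refine Finset.sum_congr rfl fun j _ => ?_
    rw [Matrix.trace_mul_comm, aux_trace_mul_outer, hH2, aux_matElem_sum]
    simp only [aux_matElem_HoH, smul_eq_mul, Finset.mul_sum]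
    refine Finset.sum_congr rfl fun k _ => ?_
    rw [mul_comm (matElem (ψ j) H (ψ k)) (matElem (ψ k) H (ψ j)), hermN]
  -- purity
  have hTr : ((ρ * ρ).trace).re = ∑ j, (p j) ^ 2 := by
    have : ρ * ρ = ∑ j, (((p j) ^ 2 : ℝ) : ℂ) • outer (ψ j) := by rw [← pow_two]; exact hρ2
    rw [this]
    have htrouter : ∀ j, (outer (ψ j)).trace = 1 := fun j => by
      have h := horth j j
      rw [if_pos rfl] at h
      rw [← h]
      simp only [Matrix.trace, Matrix.diag_apply, outer, dotProduct, Pi.star_apply]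
      exact Finset.sum_congr rfl fun i _ => by ring
    simp only [Matrix.trace_sum, Matrix.trace_smul, htrouter, smul_eq_mul, mul_one]
    rw [Fin.sum_univ_two, Fin.sum_univ_two, Complex.add_re, Complex.ofReal_re,
      Complex.ofReal_re]
  -- put everything together
  rw [PoC, hT1, hT2, hTr, QFI]
  rw [← Complex.ofReal_sub, Complex.ofReal_re]
  -- symmetry of |matrix elements|
  have hsym : Complex.normSq (matElem (ψ 1) H (ψ 0)) = Complex.normSq (matElem (ψ 0) H (ψ 1)) := by
    rw [← aux_star_matElem hH (ψ 0) (ψ 1)]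
    simp [Complex.star_def]
  have hp0 := hp 0; have hp1 := hp 1
  have hb : p 1 = 1 - p 0 := by
    have := hsum; rw [Fin.sum_univ_two] at this; linarith
  have h00 : p 0 + p 0 ≠ 0 := by positivity
  have h01 : p 0 + p 1 ≠ 0 := by positivity
  have h10 : p 1 + p 0 ≠ 0 := by positivity
  have h11 : p 1 + p 1 ≠ 0 := by positivity
  have hne0 : p 0 ≠ 0 := ne_of_gt hp0
  have hne1 : p 1 ≠ 0 := ne_of_gt hp1
  simp only [Fin.sum_univ_two, if_neg h00, if_neg h01, if_neg h10, if_neg h11, hsym]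
  have hden : 1 - (p 0 ^ 2 + p 1 ^ 2) ≠ 0 := by
    rw [hb]; nlinarith
  have h1a : (1 : ℝ) - p 0 ≠ 0 := by rw [← hb]; exact hne1
  rw [hb] at hden ⊢
  field_simp
  ring
end

section
/- Let σ be a full-rank density operator with largest eigenvalue p_max < 1 and corresponding unit eigenvector Φ. Then the purity of coherence satisfies P_H(σ) ≥ V_H(Φ) · (p_max²/(1 − p_max) − 1), where V_H(Φ) = ⟨Φ|H²|Φ⟩ − ⟨Φ|H|Φ⟩². -/
open Matrix BigOperators

lemma coeff_nonneg (pj pk : ℝ) (hj : 0 < pj) (hk : 0 < pk) :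
    0 ≤ (pk^2 * pj⁻¹ - pj) + (pj^2 * pk⁻¹ - pk) := by
  have h : (pk^2 * pj⁻¹ - pj) + (pj^2 * pk⁻¹ - pk) = (pj+pk)*(pj-pk)^2/(pj*pk) := by
    field_simp; ring
  rw [h]; positivity

lemma coeff_key (p0 pk : ℝ) (h0 : 0 < p0) (hk : 0 < pk) (hsum : p0 + pk ≤ 1)
    (hlt : p0 < 1) :
    p0^2/(1-p0) - 1 ≤ (pk^2 * p0⁻¹ - p0) + (p0^2 * pk⁻¹ - pk) := by
  have h1 : (0:ℝ) < 1 - p0 := by linarith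
  have e1 : p0^2/(1-p0) ≤ p0^2 * pk⁻¹ := by
    rw [← div_eq_mul_inv]
    apply div_le_div_of_nonneg_left (by positivity) hk (by linarith)
  have e2 : (0:ℝ) ≤ pk^2 * p0⁻¹ := by positivity
  linarith

/-- Lower bound on the purity of coherence in terms of the largest eigenvalue
p_max (< 1) and the variance of the corresponding eigenvector. -/
theorem poc_lower_bound_max_eigenvector {d : ℕ}
    (H σ : Matrix (Fin d) (Fin d) ℂ) (hH : H.IsHermitian)
    (p : Fin d → ℝ) (ψ : Fin d → Fin d → ℂ)
    (horth : ∀ i j, star (ψ i) ⬝ᵥ ψ j = if i = j then (1 : ℂ) else 0)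
    (hp : ∀ j, 0 < p j) (hsum : ∑ j, p j = 1)
    (hσ : σ = ∑ j, (p j : ℂ) • outer (ψ j))
    (i₀ : Fin d) (hmax : ∀ j, p j ≤ p i₀) (hlt : p i₀ < 1) :
    variance H (ψ i₀) * (p i₀ ^ 2 / (1 - p i₀) - 1) ≤ PoC H σ := by
  classical
  set U : Matrix (Fin d) (Fin d) ℂ := Matrix.of fun j k => ψ k j with hU
  have hUHU : Uᴴ * U = 1 := by
    ext i j
    have := horth i j
    simpa [Matrix.mul_apply, Matrix.conjTranspose_apply, hU, Matrix.one_apply,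
      dotProduct] using this
  have hUUH : U * Uᴴ = 1 := mul_eq_one_comm.mp hUHU
  have hcoll : ∀ X : Matrix (Fin d) (Fin d) ℂ, Uᴴ * (U * X) = X := fun X => by
    rw [← Matrix.mul_assoc, hUHU, Matrix.one_mul]
  have hcoll' : ∀ X : Matrix (Fin d) (Fin d) ℂ, U * (Uᴴ * X) = X := fun X => by
    rw [← Matrix.mul_assoc, hUUH, Matrix.one_mul]
  have conj_mul : ∀ A B : Matrix (Fin d) (Fin d) ℂ,
      (U*A*Uᴴ)*(U*B*Uᴴ) = U*(A*B)*Uᴴ := fun A B => by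
    simp only [Matrix.mul_assoc, hcoll]
  set D : Matrix (Fin d) (Fin d) ℂ := Matrix.diagonal (fun j => (p j : ℂ)) with hD
  set Dinv : Matrix (Fin d) (Fin d) ℂ := Matrix.diagonal (fun j => ((p j)⁻¹ : ℝ)) with hDi
  have hσ' : σ = U * D * Uᴴ := by
    rw [hσ]
    ext i l
    simp [Matrix.mul_apply, Matrix.diagonal_apply, hU, outer, hD,
      Matrix.sum_apply, Matrix.conjTranspose_apply, mul_ite, ite_mul, mul_zero, zero_mul,
      Finset.sum_ite_eq, Finset.sum_ite_eq']
    exact Finset.sum_congr rfl fun x _ => by ring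
  have hDDinv : D * Dinv = 1 := by
    rw [hD, hDi, Matrix.diagonal_mul_diagonal]
    ext i j
    simp only [Matrix.diagonal_apply, Matrix.one_apply]
    split
    · rw [← Complex.ofReal_mul, mul_inv_cancel₀ (hp i).ne', Complex.ofReal_one]
    · rfl
  have hσinv : σ⁻¹ = U * Dinv * Uᴴ := by
    apply Matrix.inv_eq_right_inv
    rw [hσ', conj_mul, hDDinv, Matrix.mul_one, hUUH]
  set K : Matrix (Fin d) (Fin d) ℂ := Uᴴ * H * U with hKdef
  have hHrep : H = U * K * Uᴴ := by
    rw [hKdef]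
    simp only [Matrix.mul_assoc, hcoll', hUUH, Matrix.mul_one]
  have hK2 : K * K = Uᴴ * (H * H) * U := by
    rw [hKdef]
    simp only [Matrix.mul_assoc, hcoll']
  have hKH : Kᴴ = K := by
    rw [hKdef]
    simp only [Matrix.conjTranspose_mul, Matrix.conjTranspose_conjTranspose, hH.eq,
      Matrix.mul_assoc]
  have hKher : ∀ j k, K k j = star (K j k) := by
    intro j k
    conv_lhs => rw [← hKH]
    rfl
  have hKel : ∀ (A : Matrix (Fin d) (Fin d) ℂ) j k,
      (Uᴴ * A * U) j k = matElem (ψ j) A (ψ k) := by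
    intro A j k
    simp only [matElem, dotProduct, Matrix.mulVec, Matrix.mul_apply,
      Matrix.conjTranspose_apply, hU, Matrix.of_apply, Pi.star_apply,
      Finset.sum_mul, Finset.mul_sum]
    rw [Finset.sum_comm]
    exact Finset.sum_congr rfl fun a _ => Finset.sum_congr rfl fun b _ => by ring
  have trace_conj : ∀ M : Matrix (Fin d) (Fin d) ℂ, (U * M * Uᴴ).trace = M.trace := by
    intro M
    rw [Matrix.trace_mul_cycle, hUHU, Matrix.one_mul]
  have htr1 : (H * σ ^ 2 * H * σ⁻¹).trace = (K * (D * D) * K * Dinv).trace := by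
    rw [hσinv, hσ', pow_two, hHrep]
    simp only [conj_mul]
    rw [trace_conj]
  have htr2 : (σ * H ^ 2).trace = (D * (K * K)).trace := by
    rw [hσ', pow_two, hHrep]
    simp only [conj_mul]
    rw [trace_conj]
  set m : Fin d → Fin d → ℝ := fun j k => Complex.normSq (K j k) with hm
  have hmul_conj : ∀ j k, K j k * K k j = (m j k : ℂ) := by
    intro j k
    rw [hKher j k, hm]
    exact Complex.mul_conj (K j k)
  have hmsymm : ∀ j k, m j k = m k j := by
    intro j k
    simp only [hm]
    rw [hKher j k, show star (K j k) = (starRingEnd ℂ) (K j k) from rfl,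
      Complex.normSq_conj]
  have hmnn : ∀ j k, 0 ≤ m j k := fun j k => Complex.normSq_nonneg _
  have hs1 : (K * (D * D) * K * Dinv).trace
      = ((∑ j, ∑ k, ((p k)^2 * (p j)⁻¹) * m j k : ℝ) : ℂ) := by
    have e : ∀ j, (K * (D * D) * K * Dinv) j j
        = ((∑ k, ((p k)^2 * (p j)⁻¹) * m j k : ℝ) : ℂ) := by
      intro j
      rw [hD, hDi, Matrix.diagonal_mul_diagonal, Matrix.mul_diagonal, Matrix.mul_apply]
      push_cast
      rw [Finset.sum_mul]
      refine Finset.sum_congr rfl fun k _ => ?_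
      rw [Matrix.mul_diagonal, show ((m j k : ℝ) : ℂ) = K j k * K k j from (hmul_conj j k).symm]
      ring
    calc (K * (D * D) * K * Dinv).trace = ∑ j, (K * (D * D) * K * Dinv) j j := rfl
      _ = ∑ j, ((∑ k, ((p k)^2 * (p j)⁻¹) * m j k : ℝ) : ℂ) :=
          Finset.sum_congr rfl fun j _ => e j
      _ = _ := by push_cast; rfl
  have hs2 : (D * (K * K)).trace = ((∑ j, ∑ k, p j * m j k : ℝ) : ℂ) := by
    have e : ∀ j, (D * (K * K)) j j = ((∑ k, p j * m j k : ℝ) : ℂ) := by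
      intro j
      rw [hD, Matrix.diagonal_mul, Matrix.mul_apply]
      push_cast
      rw [Finset.mul_sum]
      refine Finset.sum_congr rfl fun k _ => ?_
      rw [show ((m j k : ℝ) : ℂ) = K j k * K k j from (hmul_conj j k).symm]
    calc (D * (K * K)).trace = ∑ j, (D * (K * K)) j j := rfl
      _ = ∑ j, ((∑ k, p j * m j k : ℝ) : ℂ) := Finset.sum_congr rfl fun j _ => e j
      _ = _ := by push_cast; rfl

  -- abbreviations
  set c : Fin d → Fin d → ℝ := fun j k => (p k)^2 * (p j)⁻¹ - p j with hc
  have hPoC : PoC H σ = ∑ j, ∑ k, c j k * m j k := by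
    rw [PoC, htr1, htr2, hs1, hs2, ← Complex.ofReal_sub, Complex.ofReal_re,
      ← Finset.sum_sub_distrib]
    refine Finset.sum_congr rfl fun j _ => ?_
    rw [← Finset.sum_sub_distrib]
    exact Finset.sum_congr rfl fun k _ => by rw [hc]; ring
  have hKii : (K i₀ i₀).im = 0 :=
    Complex.conj_eq_iff_im.mp (hKher i₀ i₀).symm
  have hv : variance H (ψ i₀) = ∑ k ∈ Finset.univ.erase i₀, m i₀ k := by
    have h1 : matElem (ψ i₀) H (ψ i₀) = K i₀ i₀ := (hKel H i₀ i₀).symm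
    have h2 : matElem (ψ i₀) (H * H) (ψ i₀) = ((∑ k, m i₀ k : ℝ) : ℂ) := by
      rw [← hKel (H * H) i₀ i₀, ← hK2, Matrix.mul_apply]
      push_cast
      exact Finset.sum_congr rfl fun k _ => hmul_conj i₀ k
    have h3 : m i₀ i₀ = ((K i₀ i₀).re)^2 := by
      rw [hm]
      simp only
      rw [Complex.normSq_apply, hKii]
      ring
    rw [variance, h1, h2, Complex.ofReal_re, ← h3,
      ← Finset.sum_erase_add Finset.univ _ (Finset.mem_univ i₀)]
    ring
  -- positivity and key coefficient facts
  have hG : ∀ j k, 0 ≤ (c j k + c k j) * m j k := fun j k =>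
    mul_nonneg (coeff_nonneg (p j) (p k) (hp j) (hp k)) (hmnn j k)
  have hple : ∀ k, k ≠ i₀ → p i₀ + p k ≤ 1 := by
    intro k hk
    rw [← hsum, show p i₀ + p k = ∑ j ∈ ({i₀, k} : Finset (Fin d)), p j from
      (Finset.sum_pair (Ne.symm hk)).symm]
    exact Finset.sum_le_sum_of_subset_of_nonneg (Finset.subset_univ _)
      (fun j _ _ => (hp j).le)
  have hkey : ∀ k ∈ Finset.univ.erase i₀,
      (p i₀ ^ 2 / (1 - p i₀) - 1) * m i₀ k ≤ (c i₀ k + c k i₀) * m i₀ k := by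
    intro k hk
    refine mul_le_mul_of_nonneg_right ?_ (hmnn i₀ k)
    have hk' : k ≠ i₀ := (Finset.mem_erase.mp hk).1
    have := coeff_key (p i₀) (p k) (hp i₀) (hp k) (hple k hk') hlt
    rw [hc]
    simp only
    linarith
  -- symmetrization
  set S : ℝ := ∑ j, ∑ k, c j k * m j k with hS
  have hS' : S = ∑ j, ∑ k, c k j * m j k := by
    rw [hS, Finset.sum_comm]
    exact Finset.sum_congr rfl fun j _ => Finset.sum_congr rfl fun k _ => by
      rw [hmsymm k j]
  have h2S : 2 * S = ∑ j, ∑ k, (c j k + c k j) * m j k := by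
    calc 2 * S = (∑ j, ∑ k, c j k * m j k) + (∑ j, ∑ k, c k j * m j k) := by
          rw [← hS', ← hS]; ring
      _ = ∑ j, ∑ k, (c j k + c k j) * m j k := by
          rw [← Finset.sum_add_distrib]
          refine Finset.sum_congr rfl fun j _ => ?_
          rw [← Finset.sum_add_distrib]
          exact Finset.sum_congr rfl fun k _ => by ring
  -- lower bound the symmetrized sum
  have hrow : ∑ k ∈ Finset.univ.erase i₀, (c i₀ k + c k i₀) * m i₀ k
      ≤ ∑ k, (c i₀ k + c k i₀) * m i₀ k :=
    Finset.sum_le_sum_of_subset_of_nonneg (Finset.erase_subset _ _)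
      (fun k _ _ => hG i₀ k)
  have hcol : ∑ j ∈ Finset.univ.erase i₀, (c j i₀ + c i₀ j) * m j i₀
      ≤ ∑ j ∈ Finset.univ.erase i₀, ∑ k, (c j k + c k j) * m j k :=
    Finset.sum_le_sum fun j _ =>
      Finset.single_le_sum (fun k _ => hG j k) (Finset.mem_univ i₀)
  have hcol' : ∑ j ∈ Finset.univ.erase i₀, (c j i₀ + c i₀ j) * m j i₀
      = ∑ k ∈ Finset.univ.erase i₀, (c i₀ k + c k i₀) * m i₀ k :=
    Finset.sum_congr rfl fun j _ => by rw [hmsymm j i₀]; ring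
  have hsplit : (∑ j, ∑ k, (c j k + c k j) * m j k)
      = (∑ k, (c i₀ k + c k i₀) * m i₀ k)
        + ∑ j ∈ Finset.univ.erase i₀, ∑ k, (c j k + c k j) * m j k :=
    (Finset.add_sum_erase Finset.univ _ (Finset.mem_univ i₀)).symm
  have hlow : 2 * (∑ k ∈ Finset.univ.erase i₀, (c i₀ k + c k i₀) * m i₀ k) ≤ 2 * S := by
    rw [h2S, hsplit]
    linarith [hrow, hcol, hcol'.le, hcol'.ge]
  have hfin : ∑ k ∈ Finset.univ.erase i₀, (p i₀ ^ 2 / (1 - p i₀) - 1) * m i₀ k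
      ≤ ∑ k ∈ Finset.univ.erase i₀, (c i₀ k + c k i₀) * m i₀ k :=
    Finset.sum_le_sum hkey
  rw [hPoC, hv]
  rw [Finset.sum_mul] at *
  have hre : (∑ k ∈ Finset.univ.erase i₀, m i₀ k * (p i₀ ^ 2 / (1 - p i₀) - 1))
      = ∑ k ∈ Finset.univ.erase i₀, (p i₀ ^ 2 / (1 - p i₀) - 1) * m i₀ k :=
    Finset.sum_congr rfl fun k _ => by ring
  rw [hre]
  linarith
end

section
/- If σ is a full-rank density operator, Ψ a unit vector with ‖ |Ψ⟩⟨Ψ| − σ ‖₁ ≤ ε and 0 < ε < 2/3, and Φ is a unit eigenvector of σ with largest eigenvalue, then P_H(σ) ≥ V_H(Φ) · (2/ε − 3). -/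
open Matrix BigOperators

/-- Trace norm of a Hermitian matrix: the sum of the absolute values of its
eigenvalues. -/
noncomputable def traceNormH {n : Type*} [Fintype n] [DecidableEq n]
    {A : Matrix n n ℂ} (hA : A.IsHermitian) : ℝ :=
  ∑ i, |hA.eigenvalues i|

/-! Let `U` be the unitary whose columns are the eigenvectors `ψ j` of `σ`, and `M = U†HU`.
The purity of coherence is `½ ∑_{j,k} |M_jk|² (p_j - p_k)² (1/p_j + 1/p_k)`, a sum of
nonnegative terms. Keeping only the terms that touch the top eigenvector `i₀` leaves
`∑_{k ≠ i₀} |M_{i₀k}|² (λ - p_k)² (1/λ + 1/p_k)` with `λ = p i₀`, and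
`∑_{k ≠ i₀} |M_{i₀k}|² = V_H(ψ i₀)`. Closeness to the pure state gives
`λ ≥ ⟨Ψ|σ|Ψ⟩ ≥ 1 - ε/2`, hence `p_k ≤ 1 - λ ≤ ε/2` for `k ≠ i₀`, and then every coefficient
is at least `(1 - ε)² (1 + 2/ε) ≥ 2/ε - 3`. -/

open Finset

variable {n : Type*}

lemma outer_eq_vecMulVec (v : n → ℂ) : outer v = vecMulVec v (star v) := rfl

lemma mul_apply_swap_eq_normSq {M : Matrix n n ℂ} (hM : M.IsHermitian) (j k : n) :
    M j k * M k j = Complex.normSq (M j k) := by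
  rw [← hM.apply k j, RCLike.star_def, Complex.mul_conj]

lemma normSq_apply_swap {M : Matrix n n ℂ} (hM : M.IsHermitian) (j k : n) :
    Complex.normSq (M k j) = Complex.normSq (M j k) := by
  rw [← hM.apply j k, RCLike.star_def, Complex.normSq_conj]

lemma two_div_sub_three_le {ε l q : ℝ} (hε0 : 0 < ε) (hε1 : ε ≤ 1) (hl1 : l ≤ 1)
    (hl : 1 - ε / 2 ≤ l) (hq0 : 0 < q) (hq : q ≤ 1 - l) :
    2 / ε - 3 ≤ (l - q) ^ 2 * (l⁻¹ + q⁻¹) := by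
  have hl0 : 0 < l := by linarith
  have hgap : (1 - ε) ^ 2 ≤ (l - q) ^ 2 := pow_le_pow_left₀ (by linarith) (by linarith) 2
  have hinv : 1 + 2 / ε ≤ l⁻¹ + q⁻¹ := by
    gcongr
    · exact one_le_inv₀ hl0 |>.mpr hl1
    · rw [div_le_iff₀ hε0, inv_mul_eq_div, le_div_iff₀ hq0]
      linarith
  have hexpand : (1 - ε) ^ 2 * (1 + 2 / ε) = 2 / ε - 3 + ε ^ 2 := by
    field_simp
    ring
  nlinarith [mul_le_mul hgap hinv (by positivity) (sq_nonneg (l - q)), sq_nonneg ε]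

variable [Fintype n]

lemma matElem_sub (x : n → ℂ) (A B : Matrix n n ℂ) :
    matElem x (A - B) x = matElem x A x - matElem x B x := by
  rw [matElem, sub_mulVec, dotProduct_sub, matElem, matElem]

lemma trace_outer (v : n → ℂ) : (outer v).trace = star v ⬝ᵥ v := by
  rw [outer_eq_vecMulVec, trace_vecMulVec, dotProduct_comm]

lemma matElem_outer_self (v : n → ℂ) : matElem v (outer v) v = (star v ⬝ᵥ v) ^ 2 := by
  rw [matElem, outer_eq_vecMulVec, vecMulVec_mulVec, dotProduct_smul, op_smul_eq_mul, sq]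

variable [DecidableEq n]

section UnitaryConj

variable {U : Matrix n n ℂ}

lemma conj_mul_conj (hU : Uᴴ * U = 1) (X Y : Matrix n n ℂ) :
    U * X * Uᴴ * (U * Y * Uᴴ) = U * (X * Y) * Uᴴ := by
  simp only [Matrix.mul_assoc]
  rw [← Matrix.mul_assoc Uᴴ U, hU, Matrix.one_mul]

lemma trace_conj (hU : Uᴴ * U = 1) (X : Matrix n n ℂ) : (U * X * Uᴴ).trace = X.trace := by
  rw [trace_mul_comm, ← Matrix.mul_assoc, hU, Matrix.one_mul]

lemma matElem_conj (hU : Uᴴ * U = 1) (A : Matrix n n ℂ) (v w : n → ℂ) :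
    matElem (U *ᵥ v) (U * A * Uᴴ) (U *ᵥ w) = matElem v A w := by
  rw [matElem, matElem, star_mulVec, mulVec_mulVec, ← dotProduct_mulVec, mulVec_mulVec]
  simp only [Matrix.mul_assoc, hU, Matrix.mul_one]
  rw [← Matrix.mul_assoc, hU, Matrix.one_mul]

lemma variance_conj (hU : Uᴴ * U = 1) (H : Matrix n n ℂ) (v : n → ℂ) :
    variance (U * H * Uᴴ) (U *ᵥ v) = variance H v := by
  rw [variance, conj_mul_conj hU, matElem_conj hU, matElem_conj hU, variance]

lemma inv_conj (hU : Uᴴ * U = 1) (X : Matrix n n ℂ) : (U * X * Uᴴ)⁻¹ = U * X⁻¹ * Uᴴ := by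
  rw [Matrix.mul_inv_rev, Matrix.mul_inv_rev, inv_eq_right_inv hU, inv_eq_left_inv hU,
    Matrix.mul_assoc]

lemma PoC_conj (hU : Uᴴ * U = 1) (H ρ : Matrix n n ℂ) :
    PoC (U * H * Uᴴ) (U * ρ * Uᴴ) = PoC H ρ := by
  simp only [PoC, sq, inv_conj hU, conj_mul_conj hU, trace_conj hU]

end UnitaryConj

lemma two_mul_sum_erase_le_sum_sum {t : n → n → ℝ} (ht_symm : ∀ j k, t j k = t k j)
    (ht_nonneg : ∀ j k, 0 ≤ t j k) (i : n) :
    2 * ∑ k ∈ univ.erase i, t i k ≤ ∑ j, ∑ k, t j k := by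
  have hrow : ∑ k ∈ univ.erase i, t i k ≤ ∑ k, t i k :=
    sum_le_sum_of_subset_of_nonneg (erase_subset _ _) fun k _ _ => ht_nonneg i k
  have hcol : ∑ j ∈ univ.erase i, t i j ≤ ∑ j ∈ univ.erase i, ∑ k, t j k :=
    sum_le_sum fun j _ => ht_symm i j ▸ single_le_sum (fun k _ => ht_nonneg j k) (mem_univ i)
  rw [← add_sum_erase _ _ (mem_univ i)]
  linarith

lemma add_le_sum_of_ne {f : n → ℝ} (hf : ∀ j, 0 ≤ f j) {i j : n} (hij : i ≠ j) :
    f i + f j ≤ ∑ k, f k := by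
  rw [← sum_pair hij]
  exact sum_le_sum_of_subset_of_nonneg (subset_univ _) fun k _ _ => hf k

section Diagonal

variable {M : Matrix n n ℂ}

lemma matElem_single (A : Matrix n n ℂ) (i j : n) :
    matElem (Pi.single i 1) A (Pi.single j 1) = A i j := by
  rw [matElem, ← Pi.single_star, star_one, single_dotProduct, one_mul, mulVec_single_one]
  rfl

lemma variance_single (hM : M.IsHermitian) (i : n) :
    variance M (Pi.single i 1) = ∑ k ∈ univ.erase i, Complex.normSq (M i k) := by
  have him : (M i i).im = 0 := Complex.conj_eq_iff_im.mp (hM.apply i i)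
  have hMM : ((M * M) i i).re = ∑ k, Complex.normSq (M i k) := by
    simp only [mul_apply, mul_apply_swap_eq_normSq hM, ← Complex.ofReal_sum, Complex.ofReal_re]
  rw [variance, matElem_single, matElem_single, hMM, ← add_sum_erase _ _ (mem_univ i),
    Complex.normSq_apply, him]
  ring

lemma PoC_diagonal (hM : M.IsHermitian) {p : n → ℝ} (hp : ∀ j, p j ≠ 0) :
    PoC M (diagonal fun j => (p j : ℂ)) =
      ∑ j, ∑ k, Complex.normSq (M j k) * (p k ^ 2 / p j - p j) := by
  have hinv : (diagonal fun j => (p j : ℂ))⁻¹ = diagonal fun j => (p j : ℂ)⁻¹ := by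
    refine inv_eq_right_inv ?_
    rw [diagonal_mul_diagonal, ← diagonal_one]
    exact congrArg diagonal (funext fun j => mul_inv_cancel₀ (by exact_mod_cast hp j))
  rw [PoC, hinv, sq, sq, diagonal_mul_diagonal]
  simp only [trace, diag_apply, mul_diagonal, diagonal_mul]
  simp only [mul_apply, diagonal_apply, mul_ite, mul_zero, sum_ite_eq',
    mem_univ, if_true, sum_mul, mul_sum, ← sum_sub_distrib, Complex.re_sum]
  refine sum_congr rfl fun j _ => sum_congr rfl fun k _ => ?_
  have h : M j k * (p k * p k) * M k j * (p j : ℂ)⁻¹ - p j * (M j k * M k j) =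
      M j k * M k j * ((p k ^ 2 / p j - p j : ℝ) : ℂ) := by
    push_cast; ring
  rw [h, mul_apply_swap_eq_normSq hM, ← Complex.ofReal_mul, Complex.ofReal_re]

lemma two_mul_PoC_diagonal (hM : M.IsHermitian) {p : n → ℝ} (hp : ∀ j, p j ≠ 0) :
    2 * PoC M (diagonal fun j => (p j : ℂ)) =
      ∑ j, ∑ k, Complex.normSq (M j k) * ((p j - p k) ^ 2 * ((p j)⁻¹ + (p k)⁻¹)) := by
  rw [PoC_diagonal hM hp, two_mul]
  nth_rewrite 2 [sum_comm]
  rw [← sum_add_distrib]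
  refine sum_congr rfl fun j _ => ?_
  rw [← sum_add_distrib]
  refine sum_congr rfl fun k _ => ?_
  rw [normSq_apply_swap hM]
  field_simp [hp j, hp k]
  ring

lemma mul_variance_single_le_PoC_diagonal (hM : M.IsHermitian) {p : n → ℝ} (hp : ∀ j, 0 < p j)
    (i : n) {c : ℝ} (hc : ∀ k ≠ i, c ≤ (p i - p k) ^ 2 * ((p i)⁻¹ + (p k)⁻¹)) :
    variance M (Pi.single i 1) * c ≤ PoC M (diagonal fun j => (p j : ℂ)) := by
  set t : n → n → ℝ := fun j k =>
    Complex.normSq (M j k) * ((p j - p k) ^ 2 * ((p j)⁻¹ + (p k)⁻¹)) with ht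
  have ht_symm : ∀ j k, t j k = t k j := fun j k => by
    simp only [ht, normSq_apply_swap hM j k]
    ring
  have ht_nonneg : ∀ j k, 0 ≤ t j k := fun j k =>
    mul_nonneg (Complex.normSq_nonneg _) <| mul_nonneg (sq_nonneg _) <|
      add_nonneg (inv_nonneg.2 (hp j).le) (inv_nonneg.2 (hp k).le)
  have hrow := two_mul_sum_erase_le_sum_sum ht_symm ht_nonneg i
  rw [← two_mul_PoC_diagonal hM fun j => (hp j).ne'] at hrow
  have hterm : ∑ k ∈ univ.erase i, Complex.normSq (M i k) * c ≤ ∑ k ∈ univ.erase i, t i k :=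
    sum_le_sum fun k hk =>
      mul_le_mul_of_nonneg_left (hc k (ne_of_mem_erase hk)) (Complex.normSq_nonneg _)
  rw [variance_single hM, sum_mul]
  linarith

end Diagonal

lemma matElem_conj_diagonal (U : Matrix n n ℂ) (d : n → ℂ) (x : n → ℂ) :
    matElem x (U * diagonal d * Uᴴ) x = ∑ j, d j * Complex.normSq ((Uᴴ *ᵥ x) j) := by
  have h : star x ᵥ* U = star (Uᴴ *ᵥ x) := by rw [star_mulVec, conjTranspose_conjTranspose]
  rw [matElem, ← mulVec_mulVec, ← mulVec_mulVec, dotProduct_mulVec, h]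
  simp only [dotProduct, mulVec_diagonal, Pi.star_apply, Complex.normSq_eq_conj_mul_self]
  exact sum_congr rfl fun j _ => by rw [RCLike.star_def]; ring

lemma re_matElem_conj_diagonal (U : Matrix n n ℂ) (p : n → ℝ) (x : n → ℂ) :
    (matElem x (U * diagonal (fun j => (p j : ℂ)) * Uᴴ) x).re =
      ∑ j, p j * Complex.normSq ((Uᴴ *ᵥ x) j) := by
  rw [matElem_conj_diagonal, Complex.re_sum]
  simp only [← Complex.ofReal_mul, Complex.ofReal_re]

lemma sum_normSq_conjTranspose_mulVec {U : Matrix n n ℂ} (hU : U * Uᴴ = 1) (x : n → ℂ) :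
    ∑ j, Complex.normSq ((Uᴴ *ᵥ x) j) = (star x ⬝ᵥ x).re := by
  have h := re_matElem_conj_diagonal U 1 x
  simp only [Pi.one_apply, Complex.ofReal_one, diagonal_one, Matrix.mul_one, hU, one_mul] at h
  rw [← h, matElem, one_mulVec]

lemma re_matElem_conj_diagonal_le {U : Matrix n n ℂ} (hU : U * Uᴴ = 1) {x : n → ℂ}
    (hx : star x ⬝ᵥ x = 1) {p : n → ℝ} {m : ℝ} (hm : ∀ j, p j ≤ m) :
    (matElem x (U * diagonal (fun j => (p j : ℂ)) * Uᴴ) x).re ≤ m := by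
  calc (matElem x (U * diagonal (fun j => (p j : ℂ)) * Uᴴ) x).re
      = ∑ j, p j * Complex.normSq ((Uᴴ *ᵥ x) j) := re_matElem_conj_diagonal U p x
    _ ≤ ∑ j, m * Complex.normSq ((Uᴴ *ᵥ x) j) :=
        sum_le_sum fun j _ => mul_le_mul_of_nonneg_right (hm j) (Complex.normSq_nonneg _)
    _ = m := by rw [← mul_sum, sum_normSq_conjTranspose_mulVec hU, hx, Complex.one_re, mul_one]

lemma re_matElem_le_half_traceNormH {A : Matrix n n ℂ} (hA : A.IsHermitian) {x : n → ℂ}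
    (hx : star x ⬝ᵥ x = 1) : (matElem x A x).re ≤ (traceNormH hA + A.trace.re) / 2 := by
  set V : Matrix n n ℂ := (hA.eigenvectorUnitary : Matrix n n ℂ)
  have hV : V * Vᴴ = 1 := Unitary.coe_mul_star_self hA.eigenvectorUnitary
  have hspec : A = V * diagonal (fun i => (hA.eigenvalues i : ℂ)) * Vᴴ := by
    conv_lhs => rw [hA.spectral_theorem, Unitary.conjStarAlgAut_apply]
    rfl
  set w := fun j => Complex.normSq ((Vᴴ *ᵥ x) j)
  have hw : ∑ j, w j = 1 := by rw [sum_normSq_conjTranspose_mulVec hV, hx, Complex.one_re]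
  have hw_le : ∀ j, w j ≤ 1 := fun j =>
    hw ▸ single_le_sum (fun k _ => Complex.normSq_nonneg _) (mem_univ j)
  rw [congrArg (matElem x · x) hspec, re_matElem_conj_diagonal, traceNormH,
    hA.trace_eq_sum_eigenvalues, Complex.re_sum, ← sum_add_distrib, sum_div]
  refine sum_le_sum fun j _ => ?_
  have hw_nonneg : 0 ≤ w j := Complex.normSq_nonneg _
  simp only [Complex.coe_algebraMap, Complex.ofReal_re]
  cases abs_cases (hA.eigenvalues j) <;> nlinarith [hw_le j]

lemma one_sub_half_traceNormH_le_re_matElem {ρ : Matrix n n ℂ} (hρ : ρ.trace = 1) {x : n → ℂ}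
    (hx : star x ⬝ᵥ x = 1) (hA : (outer x - ρ).IsHermitian) :
    1 - traceNormH hA / 2 ≤ (matElem x ρ x).re := by
  have h := re_matElem_le_half_traceNormH hA hx
  rw [matElem_sub, matElem_outer_self, trace_sub, trace_outer, hx, hρ, sub_self,
    Complex.zero_re, add_zero, one_pow, Complex.sub_re, Complex.one_re] at h
  linarith

lemma conjTranspose_mul_self_of_orthonormal {ψ : n → n → ℂ}
    (hψ : ∀ i j, star (ψ i) ⬝ᵥ ψ j = if i = j then (1 : ℂ) else 0) :
    (of ψ)ᵀᴴ * (of ψ)ᵀ = 1 := by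
  ext i j
  simpa [mul_apply, dotProduct, one_apply] using hψ i j

lemma sum_smul_outer (d : n → ℂ) (ψ : n → n → ℂ) :
    ∑ j, d j • outer (ψ j) = (of ψ)ᵀ * diagonal d * (of ψ)ᵀᴴ := by
  ext a b
  simp only [Matrix.sum_apply, Matrix.smul_apply, outer, RCLike.star_def, smul_eq_mul, mul_apply,
    transpose_apply, of_apply, diagonal_apply, mul_ite, mul_zero, sum_ite_eq', mem_univ,
    if_true, conjTranspose_apply]
  exact sum_congr rfl fun j _ => by ring

lemma transpose_of_mulVec_single (ψ : n → n → ℂ) (i : n) :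
    (of ψ)ᵀ *ᵥ Pi.single i 1 = ψ i := by
  rw [mulVec_single_one]
  rfl

/-- If a full-rank state σ is ε-close (trace norm) to a pure state Ψ with
ε < 2/3, then P_H(σ) ≥ V_H(Φ)·(2/ε − 3) where Φ is a top eigenvector of σ. -/
theorem poc_lower_bound_close_to_pure {d : ℕ}
    (H σ : Matrix (Fin d) (Fin d) ℂ) (hH : H.IsHermitian)
    (p : Fin d → ℝ) (ψ : Fin d → Fin d → ℂ)
    (horth : ∀ i j, star (ψ i) ⬝ᵥ ψ j = if i = j then (1 : ℂ) else 0)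
    (hp : ∀ j, 0 < p j) (hsum : ∑ j, p j = 1)
    (hσ : σ = ∑ j, (p j : ℂ) • outer (ψ j))
    (Ψ : Fin d → ℂ) (hΨ : star Ψ ⬝ᵥ Ψ = 1)
    {ε : ℝ} (hε0 : 0 < ε) (hε2 : ε < 2 / 3)
    (hA : (outer Ψ - σ).IsHermitian)
    (hclose : traceNormH hA ≤ ε)
    (i₀ : Fin d) (hmax : ∀ j, p j ≤ p i₀) :
    variance H (ψ i₀) * (2 / ε - 3) ≤ PoC H σ := by
  set U : Matrix (Fin d) (Fin d) ℂ := (of ψ)ᵀ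
  have hU : Uᴴ * U = 1 := conjTranspose_mul_self_of_orthonormal horth
  have hσU : σ = U * diagonal (fun j => (p j : ℂ)) * Uᴴ := hσ.trans (sum_smul_outer _ ψ)
  have htrace : σ.trace = 1 := by
    rw [hσU, trace_conj hU, trace_diagonal, ← Complex.ofReal_sum, hsum, Complex.ofReal_one]
  have htop : 1 - ε / 2 ≤ p i₀ := calc
    1 - ε / 2 ≤ 1 - traceNormH hA / 2 := by linarith
    _ ≤ (matElem Ψ σ Ψ).re := one_sub_half_traceNormH_le_re_matElem htrace hΨ hA
    _ ≤ p i₀ := hσU ▸ re_matElem_conj_diagonal_le (mul_eq_one_comm.mp hU) hΨ hmax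
  have hrest : ∀ k ≠ i₀, p k ≤ 1 - p i₀ := fun k hk => by
    linarith [add_le_sum_of_ne (fun j => (hp j).le) hk]
  have hle_one : p i₀ ≤ 1 := hsum ▸ single_le_sum (fun j _ => (hp j).le) (mem_univ i₀)
  set M := Uᴴ * H * U
  have hHM : U * M * Uᴴ = H := by
    simp only [M, ← Matrix.mul_assoc, mul_eq_one_comm.mp hU, Matrix.one_mul]
    rw [Matrix.mul_assoc, mul_eq_one_comm.mp hU, Matrix.mul_one]
  rw [← transpose_of_mulVec_single ψ i₀, ← hHM, variance_conj hU, hσU, PoC_conj hU]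
  exact mul_variance_single_le_PoC_diagonal (isHermitian_conjTranspose_mul_mul U hH) hp i₀
    fun k hk => two_div_sub_three_le hε0 (by linarith) hle_one htop (hp k) (hrest k hk)
end

section
/- Let ρ be a density operator with support projector Π_ρ and let Q = I − Π_ρ. Then the support of H ρ H is contained in the support of ρ if and only if Π_ρ commutes with H (equivalently, Q H Π_ρ = 0). -/
open Matrix BigOperators
open scoped ComplexOrder

/-!
Let `Q = 1 - P`. Since `range ρ = range P = ker Q`, the support condition says `Q H ρ H = 0`.
Multiplying on the right by `Q` gives `(Q H) ρ (Q H)ᴴ = 0`, and positivity of `ρ` upgrades this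
to `Q H ρ = 0`, i.e. `range ρ ≤ ker (Q H)`; as `range ρ = range P`, this is `Q H P = 0`.
Finally, for self-adjoint `H` and an orthogonal projection `P`, `Q H P = 0` says `H P = P H P`,
whose adjoint is `P H = P H P`, so `Q H P = 0` is equivalent to `P H = H P`.
-/

theorem commute_iff_one_sub_mul_mul_eq_zero {R : Type*} [Ring R] [StarRing R] {P H : R}
    (hP : IsSelfAdjoint P) (hPP : IsIdempotentElem P) (hH : IsSelfAdjoint H) :
    Commute P H ↔ (1 - P) * H * P = 0 := by
  rw [sub_mul, one_mul, sub_mul, sub_eq_zero]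
  refine ⟨fun h => by rw [h.eq, mul_assoc, hPP.eq], fun h => ?_⟩
  have h' : P * H = P * H * P := by
    simpa only [star_mul, hP.star_eq, hH.star_eq, mul_assoc] using congrArg star h
  exact h'.trans h.symm

namespace Matrix

variable {m n p : Type*} [Fintype n]

theorem mul_eq_zero_iff_range_mulVecLin_le_ker {K : Type*} [CommRing K] [Fintype p]
    (A : Matrix m n K) (B : Matrix n p K) :
    A * B = 0 ↔ LinearMap.range B.mulVecLin ≤ LinearMap.ker A.mulVecLin := by
  classical
  rw [LinearMap.range_le_ker_iff, ← mulVecLin_mul, ← toLin'_apply', LinearEquiv.map_eq_zero_iff]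

theorem range_mulVecLin_eq_ker_one_sub {K : Type*} [CommRing K] [DecidableEq n]
    {P : Matrix n n K} (hP : IsIdempotentElem P) :
    LinearMap.range P.mulVecLin = LinearMap.ker (1 - P).mulVecLin := by
  have hP' : IsIdempotentElem P.mulVecLin := by
    rw [IsIdempotentElem, Module.End.mul_eq_comp, ← mulVecLin_mul, hP.eq]
  rw [LinearMap.IsIdempotentElem.range_eq_ker_one_sub hP', ← toLin'_apply', ← toLin'_apply',
    map_sub, toLin'_one, Module.End.one_eq_id]

variable {𝕜 : Type*} [RCLike 𝕜]

theorem PosSemidef.mul_mul_conjTranspose_eq_zero_iff {ρ : Matrix n n 𝕜} (hρ : ρ.PosSemidef)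
    (X : Matrix m n 𝕜) : X * ρ * Xᴴ = 0 ↔ X * ρ = 0 := by
  classical
  open scoped MatrixOrder in
  obtain ⟨B, rfl⟩ := CStarAlgebra.nonneg_iff_eq_star_mul_self.mp hρ.nonneg
  have h : X * (Bᴴ * B) * Xᴴ = (X * Bᴴ) * (X * Bᴴ)ᴴ := by
    simp only [conjTranspose_mul, conjTranspose_conjTranspose, Matrix.mul_assoc]
  rw [star_eq_conjTranspose, h, self_mul_conjTranspose_eq_zero,
    mul_conjTranspose_mul_self_eq_zero]

theorem range_mulVecLin_mul_mul_le_iff [DecidableEq n] {H ρ P : Matrix n n 𝕜}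
    (hH : H.IsHermitian) (hρ : ρ.PosSemidef) (hP : P.IsHermitian) (hPP : IsIdempotentElem P)
    (hPρ : LinearMap.range P.mulVecLin = LinearMap.range ρ.mulVecLin) :
    LinearMap.range (H * ρ * H).mulVecLin ≤ LinearMap.range ρ.mulVecLin ↔
      (1 - P) * H * P = 0 := by
  have hQH : ((1 - P) * H)ᴴ = H * (1 - P) := by
    rw [conjTranspose_mul, conjTranspose_sub, conjTranspose_one, hP.eq, hH.eq]
  calc LinearMap.range (H * ρ * H).mulVecLin ≤ LinearMap.range ρ.mulVecLin
      ↔ (1 - P) * (H * ρ * H) = 0 := by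
        rw [← hPρ, range_mulVecLin_eq_ker_one_sub hPP, mul_eq_zero_iff_range_mulVecLin_le_ker]
    _ ↔ (1 - P) * H * ρ = 0 := by
        refine ⟨fun h => (hρ.mul_mul_conjTranspose_eq_zero_iff _).mp ?_, fun h => ?_⟩
        · rw [hQH]
          simpa only [Matrix.mul_assoc, Matrix.zero_mul] using congrArg (· * (1 - P)) h
        · rw [← Matrix.mul_assoc, ← Matrix.mul_assoc, h, Matrix.zero_mul]
    _ ↔ (1 - P) * H * P = 0 := by
        rw [mul_eq_zero_iff_range_mulVecLin_le_ker, mul_eq_zero_iff_range_mulVecLin_le_ker, hPρ]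

end Matrix

/-- The support of H ρ H is contained in the support of ρ iff the support
projector P of ρ commutes with H, equivalently (I − P) H P = 0. -/
theorem support_HρH_subset_iff_commute {d : ℕ}
    (H ρ P : Matrix (Fin d) (Fin d) ℂ) (hH : H.IsHermitian)
    (hρ : ρ.PosSemidef)
    (hPherm : P.IsHermitian) (hPidem : P * P = P)
    (hPrange : LinearMap.range P.mulVecLin = LinearMap.range ρ.mulVecLin) :
    (LinearMap.range (H * ρ * H).mulVecLin ≤ LinearMap.range ρ.mulVecLin
        ↔ P * H = H * P) ∧
      (P * H = H * P ↔ (1 - P) * H * P = 0) := by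
  have hcomm : P * H = H * P ↔ (1 - P) * H * P = 0 :=
    commute_iff_one_sub_mul_mul_eq_zero hPherm.isSelfAdjoint hPidem hH.isSelfAdjoint
  exact ⟨(range_mulVecLin_mul_mul_le_iff hH hρ hPherm hPidem hPrange).trans hcomm.symm, hcomm⟩
end

section
/- Let ρ = Σ_i p_i |φ_i⟩⟨φ_i| be a full-rank density operator on a finite-dimensional Hilbert space S and H_S a Hermitian operator on S. Define the Hermitian operator H_A = −2 Σ_{i,j} (√(p_i p_j)/(p_i + p_j)) ⟨φ_i|H_S|φ_j⟩ |φ_j⟩⟨φ_i| on a copy A of S, and the purification |Φ_ρ⟩ = Σ_i √p_i |φ_i⟩ ⊗ |φ_i⟩. Then for H_tot = H_S ⊗ I + I ⊗ H_A, the energy variance of |Φ_ρ⟩ equals one quarter of the quantum Fisher information: ⟨Φ_ρ|H_tot²|Φ_ρ⟩ − ⟨Φ_ρ|H_tot|Φ_ρ⟩² = (1/4) F_{H_S}(ρ) = (1/2) Σ_{i,j} ((p_i − p_j)²/(p_i + p_j)) |⟨φ_i|H_S|φ_j⟩|². -/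
/-!
Let `U` be the unitary whose columns are the `φ i`, `D = diag (√p)` and `h = Uᴴ H_S U` the matrix
of `H_S` in the eigenbasis. The purification is `Φ = vec (U D Uᵀ)` and `H_A = U Gᵀ Uᴴ` with
`G = w ⊙ h`, `w k l = -2 √(p_k p_l) / (p_k + p_l)`. Since
`(B ⊗ 1 + 1 ⊗ A) vec X = vec (X Bᵀ + A X)` and `X ↦ U X Uᵀ` preserves the Hilbert–Schmidt inner
product, everything reduces to the eigenbasis: `H_tot Φ` becomes `K = D hᵀ + Gᵀ D`, whose
`(l, k)` entry is `√p_l (p_l - p_k) / (p_k + p_l) h_kl`. The diagonal of `K` vanishes, so the mean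
energy `tr (D K)` is zero and the variance is `‖K‖² = ∑ p_l (p_l - p_k)² / (p_k + p_l)² |h_kl|²`,
which symmetrizes in `(k, l)` to `½ ∑ (p_k - p_l)² / (p_k + p_l) |h_kl|²`.
-/

open Matrix BigOperators

/-- Rank-one operator |v⟩⟨w| as a matrix. -/
noncomputable def ketbra {n : Type*} (v w : n → ℂ) : Matrix n n ℂ :=
  fun i j => v i * star (w j)

open Kronecker

namespace Matrix

variable {n m : Type*} [Fintype n] [Fintype m]

theorem transpose_of_orthonormal_mem_unitaryGroup [DecidableEq n] {R : Type*} [CommRing R]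
    [StarRing R] {φ : n → n → R} (hφ : ∀ i j, star (φ i) ⬝ᵥ φ j = if i = j then 1 else 0) :
    (of φ)ᵀ ∈ unitaryGroup n R := by
  rw [mem_unitaryGroup_iff']
  ext i j
  simpa [mul_apply, one_apply, dotProduct] using hφ i j

theorem trace_conjTranspose_mul_of_mem_unitaryGroup [DecidableEq n] {R : Type*} [CommRing R]
    [StarRing R] {U V : Matrix n n R} (hU : U ∈ unitaryGroup n R) (hV : V ∈ unitaryGroup n R)
    (A B : Matrix n n R) :
    ((U * A * V)ᴴ * (U * B * V)).trace = (Aᴴ * B).trace := by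
  have hU' : Uᴴ * U = 1 := mem_unitaryGroup_iff'.1 hU
  have hV' : V * Vᴴ = 1 := mem_unitaryGroup_iff.1 hV
  calc ((U * A * V)ᴴ * (U * B * V)).trace = (Vᴴ * (Aᴴ * B) * V).trace := by
        simp only [conjTranspose_mul, Matrix.mul_assoc, ← Matrix.mul_assoc Uᴴ U, hU',
          Matrix.one_mul]
    _ = (Aᴴ * B).trace := by rw [trace_mul_cycle, hV', Matrix.one_mul]

theorem trace_conjTranspose_mul_self_eq_sum_normSq (A : Matrix m n ℂ) :
    (Aᴴ * A).trace = ∑ i, ∑ j, (Complex.normSq (A i j) : ℂ) := by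
  rw [trace, Finset.sum_comm]
  refine Finset.sum_congr rfl fun j _ => ?_
  simp [mul_apply, Complex.normSq_eq_conj_mul_self]

theorem kronecker_one_add_one_kronecker_mulVec_vec [DecidableEq n] [DecidableEq m]
    {R : Type*} [CommRing R] (A : Matrix n n R) (B : Matrix m m R) (X : Matrix n m R) :
    (B ⊗ₖ 1 + 1 ⊗ₖ A) *ᵥ vec X = vec (X * Bᵀ + A * X) := by
  rw [add_mulVec, kronecker_mulVec_vec, kronecker_mulVec_vec, vec_add]
  simp

theorem vec_mul_diagonal_mul_transpose [DecidableEq n] (s : n → ℂ) (U : Matrix n n ℂ) :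
    vec (U * diagonal s * Uᵀ) = fun q : n × n => ∑ i, s i * U q.1 i * U q.2 i := by
  ext q
  simp only [vec, mul_apply, diagonal_apply, transpose_apply, mul_ite, mul_zero,
    Finset.sum_ite_eq', Finset.mem_univ, if_true]
  exact Finset.sum_congr rfl fun i _ => by ring

theorem sum_smul_ketbra (c φ : n → n → ℂ) :
    ∑ i, ∑ j, c i j • ketbra (φ j) (φ i) = (of φ)ᵀ * (of c)ᵀ * (of φ)ᵀᴴ := by
  ext a b
  simp only [Matrix.sum_apply, Matrix.smul_apply, ketbra, mul_apply, transpose_apply, of_apply,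
    conjTranspose_apply, smul_eq_mul, Finset.sum_mul]
  exact Finset.sum_congr rfl fun i _ => Finset.sum_congr rfl fun j _ => by ring

theorem conjTranspose_mul_mul_apply_eq_matElem (A : Matrix n n ℂ) (φ : n → n → ℂ) (k l : n) :
    ((of φ)ᵀᴴ * A * (of φ)ᵀ) k l = matElem (φ k) A (φ l) := by
  rw [matElem, dotProduct_mulVec]
  simp only [dotProduct, vecMul, mul_apply, conjTranspose_apply, transpose_apply, of_apply,
    Pi.star_apply]

theorem mul_transpose_add_mul_eq_of_mem_unitaryGroup [DecidableEq n] {R : Type*} [CommRing R]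
    [StarRing R] {U : Matrix n n R} (hU : U ∈ unitaryGroup n R) (B D G : Matrix n n R) :
    U * D * Uᵀ * Bᵀ + U * G * Uᴴ * (U * D * Uᵀ) = U * (D * (Uᴴ * B * U)ᵀ + G * D) * Uᵀ := by
  have h₁ : Uᴴ * U = 1 := mem_unitaryGroup_iff'.1 hU
  have h₂ : Uᴴᵀ * Uᵀ = 1 := by
    rw [← transpose_mul, show U * Uᴴ = 1 from mem_unitaryGroup_iff.1 hU, transpose_one]
  simp only [transpose_mul, Matrix.mul_add, Matrix.add_mul, Matrix.mul_assoc, h₂,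
    ← Matrix.mul_assoc Uᴴ U, h₁, Matrix.one_mul, Matrix.mul_one]

theorem matElem_mul_self {H : Matrix m m ℂ} (hH : H.IsHermitian) (v : m → ℂ) :
    matElem v (H * H) v = star (H *ᵥ v) ⬝ᵥ (H *ᵥ v) := by
  rw [matElem, ← mulVec_mulVec, dotProduct_mulVec, star_mulVec, hH.eq]

theorem variance_kronecker_one_add_one_kronecker_vec [DecidableEq n] [DecidableEq m]
    {A : Matrix n n ℂ} {B : Matrix m m ℂ} (hA : A.IsHermitian) (hB : B.IsHermitian)
    (X : Matrix n m ℂ) :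
    variance (B ⊗ₖ 1 + 1 ⊗ₖ A) (vec X) =
      ((X * Bᵀ + A * X)ᴴ * (X * Bᵀ + A * X)).trace.re - (Xᴴ * (X * Bᵀ + A * X)).trace.re ^ 2 := by
  have hH : (B ⊗ₖ 1 + 1 ⊗ₖ A).IsHermitian := by
    simp only [IsHermitian, conjTranspose_add, conjTranspose_kronecker, conjTranspose_one, hA.eq,
      hB.eq]
  rw [variance, matElem_mul_self hH, matElem, kronecker_one_add_one_kronecker_mulVec_vec,
    star_vec_dotProduct_vec, star_vec_dotProduct_vec]

end Matrix

theorem sqrt_add_neg_two_mul_sqrt_mul_div_mul_sqrt {a b : ℝ} (ha : 0 ≤ a) (hab : a + b ≠ 0) :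
    √b + -2 * √(a * b) / (a + b) * √a = √b * (b - a) / (a + b) := by
  rw [Real.sqrt_mul ha]
  field_simp
  linear_combination (-2 * √b) * Real.mul_self_sqrt ha

theorem sum_sum_mul_sq_div_sq_eq_half_sum_sum {ι : Type*} [Fintype ι] {p : ι → ℝ}
    (hp : ∀ i j, p i + p j ≠ 0) {N : ι → ι → ℝ} (hN : ∀ i j, N i j = N j i) :
    ∑ i, ∑ j, p j * (p j - p i) ^ 2 / (p i + p j) ^ 2 * N i j =
      1 / 2 * ∑ i, ∑ j, (p i - p j) ^ 2 / (p i + p j) * N i j := by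
  have hswap : ∑ i, ∑ j, p j * (p j - p i) ^ 2 / (p i + p j) ^ 2 * N i j =
      ∑ i, ∑ j, p i * (p i - p j) ^ 2 / (p i + p j) ^ 2 * N i j := by
    rw [Finset.sum_comm]
    refine Finset.sum_congr rfl fun i _ => Finset.sum_congr rfl fun j _ => ?_
    rw [hN, add_comm (p j)]
  have hpair : ∀ i j, p j * (p j - p i) ^ 2 / (p i + p j) ^ 2 * N i j +
      p i * (p i - p j) ^ 2 / (p i + p j) ^ 2 * N i j = (p i - p j) ^ 2 / (p i + p j) * N i j := by
    intro i j
    field_simp [hp i j]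
    ring
  simp only [← hpair, Finset.sum_add_distrib, ← hswap]
  ring

section Purification

variable {n : Type*}

noncomputable def sqrtDiag [DecidableEq n] (p : n → ℝ) : Matrix n n ℂ :=
  diagonal fun i => ((√(p i) : ℝ) : ℂ)

noncomputable def ancillaWeight (p : n → ℝ) : Matrix n n ℂ :=
  of fun i j => ((-2 * √(p i * p j) / (p i + p j) : ℝ) : ℂ)

/-- The matrix `K` with `H_tot Φ = vec (U K Uᵀ)`. -/
noncomputable def purifiedCoeff [Fintype n] [DecidableEq n] (p : n → ℝ) (h : Matrix n n ℂ) :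
    Matrix n n ℂ :=
  sqrtDiag p * hᵀ + (ancillaWeight p ⊙ h)ᵀ * sqrtDiag p

theorem isHermitian_ancillaWeight_hadamard (p : n → ℝ) {h : Matrix n n ℂ}
    (hh : h.IsHermitian) : (ancillaWeight p ⊙ h).IsHermitian := by
  ext i j
  rw [conjTranspose_apply, hadamard_apply, hadamard_apply, star_mul', hh.apply]
  simp only [ancillaWeight, of_apply, Complex.star_def, Complex.conj_ofReal, mul_comm (p j),
    add_comm (p j)]

theorem purifiedCoeff_apply [Fintype n] [DecidableEq n] {p : n → ℝ} (hp : ∀ i, 0 < p i)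
    (h : Matrix n n ℂ) (k l : n) :
    purifiedCoeff p h l k = ((√(p l) * (p l - p k) / (p k + p l) : ℝ) : ℂ) * h k l := by
  rw [← sqrt_add_neg_two_mul_sqrt_mul_div_mul_sqrt (hp k).le (add_pos (hp k) (hp l)).ne']
  simp only [purifiedCoeff, sqrtDiag, ancillaWeight, Matrix.add_apply, diagonal_mul,
    mul_diagonal, transpose_apply, hadamard_apply, of_apply]
  push_cast
  ring

theorem trace_sqrtDiag_conjTranspose_mul_purifiedCoeff [Fintype n] [DecidableEq n] {p : n → ℝ}
    (hp : ∀ i, 0 < p i) (h : Matrix n n ℂ) :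
    ((sqrtDiag p)ᴴ * purifiedCoeff p h).trace = 0 := by
  refine Finset.sum_eq_zero fun k _ => ?_
  simp [sqrtDiag, diagonal_conjTranspose, diagonal_mul, purifiedCoeff_apply hp]

theorem variance_purification_eq_sum_normSq_purifiedCoeff [Fintype n] [DecidableEq n]
    {p : n → ℝ} (hp : ∀ i, 0 < p i) {U : Matrix n n ℂ} (hU : U ∈ unitaryGroup n ℂ)
    {H : Matrix n n ℂ} (hH : H.IsHermitian) :
    variance (H ⊗ₖ 1 + 1 ⊗ₖ (U * (ancillaWeight p ⊙ (Uᴴ * H * U))ᵀ * Uᴴ))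
        (vec (U * sqrtDiag p * Uᵀ)) =
      ∑ l, ∑ k, Complex.normSq (purifiedCoeff p (Uᴴ * H * U) l k) := by
  have hA : (U * (ancillaWeight p ⊙ (Uᴴ * H * U))ᵀ * Uᴴ).IsHermitian :=
    isHermitian_mul_mul_conjTranspose U
      (isHermitian_ancillaWeight_hadamard p (isHermitian_conjTranspose_mul_mul U hH)).transpose
  have hUt : Uᵀ ∈ unitaryGroup n ℂ := transpose_mem_unitaryGroup_iff.2 hU
  rw [variance_kronecker_one_add_one_kronecker_vec hA hH,
    mul_transpose_add_mul_eq_of_mem_unitaryGroup hU, ← purifiedCoeff,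
    trace_conjTranspose_mul_of_mem_unitaryGroup hU hUt,
    trace_conjTranspose_mul_of_mem_unitaryGroup hU hUt,
    trace_sqrtDiag_conjTranspose_mul_purifiedCoeff hp, trace_conjTranspose_mul_self_eq_sum_normSq]
  simp

theorem sum_sum_normSq_purifiedCoeff [Fintype n] [DecidableEq n] {p : n → ℝ}
    (hp : ∀ i, 0 < p i) {h : Matrix n n ℂ} (hh : h.IsHermitian) :
    ∑ l, ∑ k, Complex.normSq (purifiedCoeff p h l k) =
      1 / 2 * ∑ i, ∑ j, (p i - p j) ^ 2 / (p i + p j) * Complex.normSq (h i j) := by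
  have hsymm : ∀ k l, Complex.normSq (h k l) = Complex.normSq (h l k) := fun k l => by
    rw [← hh.apply l k, Complex.star_def, Complex.normSq_conj]
  rw [Finset.sum_comm, ← sum_sum_mul_sq_div_sq_eq_half_sum_sum
    (fun i j => (add_pos (hp i) (hp j)).ne') hsymm]
  refine Finset.sum_congr rfl fun k _ => Finset.sum_congr rfl fun l _ => ?_
  rw [purifiedCoeff_apply hp, Complex.normSq_mul, Complex.normSq_ofReal, div_mul_div_comm,
    mul_mul_mul_comm, Real.mul_self_sqrt (hp l).le]
  ring

end Purification

open Kronecker in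
theorem purification_variance_eq_quarter_qfi_general {d : ℕ}
    (HS : Matrix (Fin d) (Fin d) ℂ) (hH : HS.IsHermitian)
    (p : Fin d → ℝ) (φ : Fin d → Fin d → ℂ)
    (horth : ∀ i j, star (φ i) ⬝ᵥ φ j = if i = j then (1 : ℂ) else 0)
    (hp : ∀ j, 0 < p j)
    (HA : Matrix (Fin d) (Fin d) ℂ)
    (hHA : HA = ∑ i, ∑ j,
      ((((-2 : ℝ) * Real.sqrt (p i * p j) / (p i + p j) : ℝ) : ℂ) *
          matElem (φ i) HS (φ j)) • ketbra (φ j) (φ i))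
    (Φ : Fin d × Fin d → ℂ)
    (hΦ : Φ = fun q => ∑ i, ((Real.sqrt (p i) : ℝ) : ℂ) * φ i q.1 * φ i q.2)
    (Htot : Matrix (Fin d × Fin d) (Fin d × Fin d) ℂ)
    (hHtot : Htot = HS ⊗ₖ (1 : Matrix (Fin d) (Fin d) ℂ) +
      (1 : Matrix (Fin d) (Fin d) ℂ) ⊗ₖ HA) :
    variance Htot Φ = (1 / 4) * QFI p φ HS ∧
      variance Htot Φ = (1 / 2) * ∑ i, ∑ j,
        (p i - p j) ^ 2 / (p i + p j) * Complex.normSq (matElem (φ i) HS (φ j)) := by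
  set U : Matrix (Fin d) (Fin d) ℂ := (of φ)ᵀ
  have hU : U ∈ unitaryGroup (Fin d) ℂ := transpose_of_orthonormal_mem_unitaryGroup horth
  have hmat : ∀ k l, (Uᴴ * HS * U) k l = matElem (φ k) HS (φ l) :=
    conjTranspose_mul_mul_apply_eq_matElem HS φ
  have hHA' : HA = U * (ancillaWeight p ⊙ (Uᴴ * HS * U))ᵀ * Uᴴ := by
    rw [hHA, sum_smul_ketbra]
    congr
    ext i j
    exact congrArg _ (hmat i j).symm
  have hX : Φ = vec (U * sqrtDiag p * Uᵀ) := hΦ.trans (vec_mul_diagonal_mul_transpose _ U).symm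
  have hmain : variance Htot Φ = (1 / 2) * ∑ i, ∑ j,
      (p i - p j) ^ 2 / (p i + p j) * Complex.normSq (matElem (φ i) HS (φ j)) := by
    rw [hHtot, hHA', hX, variance_purification_eq_sum_normSq_purifiedCoeff hp hU hH,
      sum_sum_normSq_purifiedCoeff hp (isHermitian_conjTranspose_mul_mul U hH)]
    simp only [hmat]
  refine ⟨?_, hmain⟩
  rw [hmain, QFI]
  simp only [fun i j => (add_pos (hp i) (hp j)).ne', if_false]
  ring

open Kronecker in
/-- The optimal purification |Φ_ρ⟩ = Σ_i √p_i |φ_i⟩⊗|φ_i⟩, with the auxiliary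
Hamiltonian H_A = −2 Σ_{ij} (√(p_i p_j)/(p_i+p_j)) ⟨φ_i|H_S|φ_j⟩ |φ_j⟩⟨φ_i|,
has total-energy variance equal to (1/4) F_{H_S}(ρ). -/
theorem purification_variance_eq_quarter_qfi {d : ℕ}
    (HS : Matrix (Fin d) (Fin d) ℂ) (hH : HS.IsHermitian)
    (p : Fin d → ℝ) (φ : Fin d → Fin d → ℂ)
    (horth : ∀ i j, star (φ i) ⬝ᵥ φ j = if i = j then (1 : ℂ) else 0)
    (hp : ∀ j, 0 < p j) (hsum : ∑ j, p j = 1)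
    (HA : Matrix (Fin d) (Fin d) ℂ)
    (hHA : HA = ∑ i, ∑ j,
      ((((-2 : ℝ) * Real.sqrt (p i * p j) / (p i + p j) : ℝ) : ℂ) *
          matElem (φ i) HS (φ j)) • ketbra (φ j) (φ i))
    (Φ : Fin d × Fin d → ℂ)
    (hΦ : Φ = fun q => ∑ i, ((Real.sqrt (p i) : ℝ) : ℂ) * φ i q.1 * φ i q.2)
    (Htot : Matrix (Fin d × Fin d) (Fin d × Fin d) ℂ)
    (hHtot : Htot = HS ⊗ₖ (1 : Matrix (Fin d) (Fin d) ℂ) +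
      (1 : Matrix (Fin d) (Fin d) ℂ) ⊗ₖ HA) :
    variance Htot Φ = (1 / 4) * QFI p φ HS ∧
      variance Htot Φ = (1 / 2) * ∑ i, ∑ j,
        (p i - p j) ^ 2 / (p i + p j) * Complex.normSq (matElem (φ i) HS (φ j)) :=
  purification_variance_eq_quarter_qfi_general HS hH p φ horth hp HA hHA Φ hΦ Htot hHtot
end

section
/- With the notation of the optimal purification construction, the operator H_A = −2 Σ_{i,j} (√(p_i p_j)/(p_i + p_j)) ⟨φ_i|H_S|φ_j⟩ |φ_j⟩⟨φ_i| satisfies Tr(ρ H_A) = −Tr(ρ H_S); consequently the purification |Φ_ρ⟩ = Σ_i √p_i |φ_i⟩⊗|φ_i⟩ has zero mean total energy: ⟨Φ_ρ|(H_S ⊗ I + I ⊗ H_A)|Φ_ρ⟩ = 0. -/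
open Matrix BigOperators

lemma trace_outer_mul {n : Type*} [Fintype n] (v : n → ℂ) (M : Matrix n n ℂ) :
    (outer v * M).trace = matElem v M v := by
  simp only [Matrix.trace, Matrix.diag, Matrix.mul_apply, outer, matElem, Matrix.mulVec,
    dotProduct, Finset.mul_sum, Pi.star_apply]
  rw [Finset.sum_comm]
  exact Finset.sum_congr rfl fun k _ => Finset.sum_congr rfl fun i _ => by ring

lemma matElem_sum {ι : Type*} {n : Type*} [Fintype n] (s : Finset ι) (v w : n → ℂ)
    (A : ι → Matrix n n ℂ) :
    matElem v (∑ i ∈ s, A i) w = ∑ i ∈ s, matElem v (A i) w := by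
  have h1 : (∑ i ∈ s, A i) *ᵥ w = ∑ i ∈ s, A i *ᵥ w := by
    ext k
    simp only [Matrix.mulVec, dotProduct, Matrix.sum_apply, Finset.sum_mul, Finset.sum_apply]
    rw [Finset.sum_comm]
  rw [matElem, h1]
  simp only [matElem, dotProduct, Finset.sum_apply, Finset.mul_sum]
  rw [Finset.sum_comm]

lemma matElem_add {n : Type*} [Fintype n] (v w : n → ℂ) (A B : Matrix n n ℂ) :
    matElem v (A + B) w = matElem v A w + matElem v B w := by
  simp only [matElem, Matrix.add_mulVec, dotProduct_add]

lemma matElem_smul {n : Type*} [Fintype n] (c : ℂ) (v w : n → ℂ) (A : Matrix n n ℂ) :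
    matElem v (c • A) w = c * matElem v A w := by
  simp only [matElem, Matrix.mulVec, dotProduct, Matrix.smul_apply, smul_eq_mul,
    Finset.mul_sum]
  exact Finset.sum_congr rfl fun k _ => Finset.sum_congr rfl fun i _ => by ring

lemma matElem_ketbra {n : Type*} [Fintype n] (v a b w : n → ℂ) :
    matElem v (ketbra a b) w = (star v ⬝ᵥ a) * (star b ⬝ᵥ w) := by
  simp only [matElem, ketbra, Matrix.mulVec, dotProduct, Pi.star_apply, Finset.mul_sum,
    Finset.sum_mul]
  rw [Finset.sum_comm]
  exact Finset.sum_congr rfl fun k _ => Finset.sum_congr rfl fun i _ => by ring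

lemma matElem_one {n : Type*} [Fintype n] [DecidableEq n] (v w : n → ℂ) :
    matElem v (1 : Matrix n n ℂ) w = star v ⬝ᵥ w := by
  simp [matElem, Matrix.one_mulVec]

lemma sum_prod_factor {α β : Type*} [Fintype α] [Fintype β] (f : α → ℂ) (g : β → ℂ) :
    (∑ q : α × β, f q.1 * g q.2) = (∑ i, f i) * (∑ j, g j) := by
  rw [Finset.sum_mul_sum]
  rw [Fintype.sum_prod_type]

open Kronecker in
lemma matElem_kron {d : ℕ} (A B : Matrix (Fin d) (Fin d) ℂ) (u v x y : Fin d → ℂ) :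
    matElem (fun q : Fin d × Fin d => u q.1 * v q.2) (A ⊗ₖ B)
      (fun q : Fin d × Fin d => x q.1 * y q.2) = matElem u A x * matElem v B y := by
  have hmv : (A ⊗ₖ B) *ᵥ (fun q : Fin d × Fin d => x q.1 * y q.2)
      = fun q => (A *ᵥ x) q.1 * (B *ᵥ y) q.2 := by
    ext q
    have := sum_prod_factor (fun c => A q.1 c * x c) (fun e => B q.2 e * y e)
    simp only [Matrix.mulVec, dotProduct, kroneckerMap_apply] at this ⊢
    rw [← this]
    exact Finset.sum_congr rfl fun r _ => by ring
  rw [matElem, hmv]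
  have := sum_prod_factor (fun a => star (u a) * (A *ᵥ x) a) (fun b => star (v b) * (B *ᵥ y) b)
  simp only [dotProduct, Pi.star_apply] at this ⊢
  unfold matElem
  simp only [dotProduct, Pi.star_apply]
  rw [← this]
  exact Finset.sum_congr rfl fun r _ => by simp [star_mul']; ring

lemma matElem_left_sum {ι : Type*} [Fintype ι] {n : Type*} [Fintype n]
    (f : ι → n → ℂ) (M : Matrix n n ℂ) (w : n → ℂ) :
    matElem (fun q => ∑ i, f i q) M w = ∑ i, matElem (f i) M w := by
  unfold matElem dotProduct
  simp only [Pi.star_apply, star_sum, Finset.sum_mul]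
  rw [Finset.sum_comm]

lemma matElem_right_sum {ι : Type*} [Fintype ι] {n : Type*} [Fintype n]
    (f : ι → n → ℂ) (M : Matrix n n ℂ) (v : n → ℂ) :
    matElem v M (fun q => ∑ i, f i q) = ∑ i, matElem v M (f i) := by
  unfold matElem Matrix.mulVec dotProduct
  simp only [Finset.mul_sum]
  refine Eq.trans (Finset.sum_congr rfl fun x _ => Finset.sum_comm) ?_
  rw [Finset.sum_comm]

open Kronecker in
/-- The auxiliary Hamiltonian of the optimal purification satisfies
Tr(ρ H_A) = −Tr(ρ H_S), so the purification has zero mean total energy. -/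
theorem purification_zero_mean_energy {d : ℕ}
    (HS : Matrix (Fin d) (Fin d) ℂ) (hH : HS.IsHermitian)
    (p : Fin d → ℝ) (φ : Fin d → Fin d → ℂ)
    (horth : ∀ i j, star (φ i) ⬝ᵥ φ j = if i = j then (1 : ℂ) else 0)
    (hp : ∀ j, 0 < p j) (hsum : ∑ j, p j = 1)
    (ρ : Matrix (Fin d) (Fin d) ℂ)
    (hρ : ρ = ∑ j, (p j : ℂ) • outer (φ j))
    (HA : Matrix (Fin d) (Fin d) ℂ)
    (hHA : HA = ∑ i, ∑ j,
      ((((-2 : ℝ) * Real.sqrt (p i * p j) / (p i + p j) : ℝ) : ℂ) *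
          matElem (φ i) HS (φ j)) • ketbra (φ j) (φ i))
    (Φ : Fin d × Fin d → ℂ)
    (hΦ : Φ = fun q => ∑ i, ((Real.sqrt (p i) : ℝ) : ℂ) * φ i q.1 * φ i q.2)
    (Htot : Matrix (Fin d × Fin d) (Fin d × Fin d) ℂ)
    (hHtot : Htot = HS ⊗ₖ (1 : Matrix (Fin d) (Fin d) ℂ) +
      (1 : Matrix (Fin d) (Fin d) ℂ) ⊗ₖ HA) :
    (ρ * HA).trace = -(ρ * HS).trace ∧ matElem Φ Htot Φ = 0 := by
  -- diagonal matrix elements of HA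
  have key : ∀ k, matElem (φ k) HA (φ k) = - matElem (φ k) HS (φ k) := by
    intro k
    rw [hHA, matElem_sum]
    simp only [matElem_sum, matElem_smul, matElem_ketbra, horth, mul_ite, mul_one, mul_zero,
      ite_mul, zero_mul]
    rw [Finset.sum_eq_single k]
    · rw [Finset.sum_eq_single k]
      · simp only [if_pos rfl]
        have h1 : Real.sqrt (p k * p k) = p k := Real.sqrt_mul_self (hp k).le
        have h2 : ((-2 : ℝ) * Real.sqrt (p k * p k) / (p k + p k) : ℝ) = -1 := by
          rw [h1]; rw [show p k + p k = 2 * p k by ring]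
          rw [div_eq_iff (by have := hp k; nlinarith : (2:ℝ) * p k ≠ 0)]; ring
        rw [h2]
        push_cast
        ring
      · intro j _ hj
        simp [hj, Ne.symm hj]
      · simp
    · intro i _ hi
      rw [Finset.sum_eq_single k]
      · simp [hi]
      · intro j _ hj
        simp [hj, Ne.symm hj]
      · simp
    · simp
  -- trace formula
  have tr : ∀ M : Matrix (Fin d) (Fin d) ℂ,
      (ρ * M).trace = ∑ j, (p j : ℂ) * matElem (φ j) M (φ j) := by
    intro M
    rw [hρ, Finset.sum_mul, Matrix.trace_sum]
    exact Finset.sum_congr rfl fun j _ => by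
      rw [smul_mul_assoc, Matrix.trace_smul, trace_outer_mul, smul_eq_mul]
  have part1 : (ρ * HA).trace = -(ρ * HS).trace := by
    rw [tr, tr, ← Finset.sum_neg_distrib]
    exact Finset.sum_congr rfl fun j _ => by rw [key]; ring
  refine ⟨part1, ?_⟩
  -- purification energy
  have hΦ' : Φ = fun q : Fin d × Fin d =>
      ∑ i, (fun r : Fin d × Fin d => ((Real.sqrt (p i) : ℝ) : ℂ) * φ i r.1 * φ i r.2) q := by
    rw [hΦ]
  have expand : matElem Φ Htot Φ =
      ∑ i, ∑ j, star ((Real.sqrt (p i) : ℂ)) * (Real.sqrt (p j) : ℂ) *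
        matElem (fun q : Fin d × Fin d => φ i q.1 * φ i q.2) Htot
          (fun q : Fin d × Fin d => φ j q.1 * φ j q.2) := by
    rw [hΦ']
    rw [matElem_left_sum]
    refine Finset.sum_congr rfl fun i _ => ?_
    rw [matElem_right_sum]
    refine Finset.sum_congr rfl fun j _ => ?_
    simp only [matElem, Matrix.mulVec, dotProduct, Pi.star_apply, star_mul', Finset.mul_sum,
      Finset.sum_mul]
    refine Finset.sum_congr rfl fun a _ => Finset.sum_congr rfl fun b _ => ?_
    simp only [Complex.star_def, Complex.conj_ofReal]
    ring
  rw [expand]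
  have hterm : ∀ i j, matElem (fun q : Fin d × Fin d => φ i q.1 * φ i q.2) Htot
      (fun q : Fin d × Fin d => φ j q.1 * φ j q.2) =
      (if i = j then (1:ℂ) else 0) * (matElem (φ i) HS (φ j) + matElem (φ i) HA (φ j)) := by
    intro i j
    rw [hHtot, matElem_add, matElem_kron, matElem_kron, matElem_one, horth i j]
    ring
  simp only [hterm]
  rw [Finset.sum_congr rfl (fun i (_ : i ∈ Finset.univ) => Finset.sum_eq_single i
    (fun j _ hj => by simp [Ne.symm hj]) (by simp))]
  simp only [eq_self_iff_true, if_true, one_mul, Complex.star_def, Complex.conj_ofReal]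
  have : ∀ i, (Real.sqrt (p i) : ℂ) * (Real.sqrt (p i) : ℂ) = (p i : ℂ) := by
    intro i
    rw [← Complex.ofReal_mul, Real.mul_self_sqrt (hp i).le]
  have final : ∑ i, (Real.sqrt (p i) : ℂ) * (Real.sqrt (p i) : ℂ) *
      (matElem (φ i) HS (φ i) + matElem (φ i) HA (φ i)) = 0 := by
    calc ∑ i, (Real.sqrt (p i) : ℂ) * (Real.sqrt (p i) : ℂ) *
        (matElem (φ i) HS (φ i) + matElem (φ i) HA (φ i))
        = ∑ i, ((p i : ℂ) * matElem (φ i) HS (φ i) + (p i : ℂ) * matElem (φ i) HA (φ i)) := by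
          refine Finset.sum_congr rfl fun i _ => ?_
          rw [this i]; ring
      _ = (ρ * HS).trace + (ρ * HA).trace := by rw [Finset.sum_add_distrib, tr, tr]
      _ = 0 := by rw [part1]; ring
  exact final
end

section
/- Let p be a probability distribution on the integers with finite support, let n_min = min{n : p(n) > 0}, and suppose gcd{n − n_min : p(n) > 0} = 1. Then there exists a positive integer L and an integer K such that the L-fold convolution p^{*L} satisfies p^{*L}(K) > 0 and p^{*L}(K−1) > 0; consequently (1/2) Σ_n |p^{*L}(n) − p^{*L}(n+1)| < 1. -/
/-!
Let `S` be the support of `p`. Since `S - nmin` generates `ℤ`, we can write `1 = a - b` with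
`a`, `b` sums of elements of `S - nmin`. Padding both sums with copies of `nmin ∈ S` writes some
`K` and `K - 1` as sums of the same number `L` of elements of `S`, so `p^{*L}` charges both.
For a probability vector `q`, `|q n - q (n + 1)| = q n + q (n + 1) - 2 min (q n) (q (n + 1))`,
so half the total variation between `q` and its translate is `1 - ∑ min (q n) (q (n + 1)) < 1`.
-/

open BigOperators

/-- Convolution of two (finitely supported) distributions on ℤ. -/
noncomputable def conv (p q : ℤ → ℝ) : ℤ → ℝ := fun n => ∑' m, p m * q (n - m)

/-- `iterConv p L` is the L-fold convolution of p with itself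
(with `iterConv p 0` the point mass at 0). -/
noncomputable def iterConv (p : ℤ → ℝ) : ℕ → ℤ → ℝ
  | 0 => fun n => if n = 0 then 1 else 0
  | L + 1 => conv p (iterConv p L)

open Function Pointwise

section conv

variable {p q : ℤ → ℝ}

lemma conv_nonneg (hp : ∀ n, 0 ≤ p n) (hq : ∀ n, 0 ≤ q n) (n : ℤ) : 0 ≤ conv p q n :=
  tsum_nonneg fun m => mul_nonneg (hp m) (hq _)

lemma support_conv_subset : support (conv p q) ⊆ support p + support q := by
  intro n hn
  obtain ⟨m, hm⟩ : ∃ m, p m * q (n - m) ≠ 0 := by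
    by_contra! h
    exact hn (by simp [conv, h])
  exact ⟨m, left_ne_zero_of_mul hm, n - m, right_ne_zero_of_mul hm, add_sub_cancel m n⟩

lemma conv_pos (hp : ∀ n, 0 ≤ p n) (hq : ∀ n, 0 ≤ q n) (hfp : (support p).Finite)
    {m n : ℤ} (hm : 0 < p m) (hn : 0 < q n) : 0 < conv p q (m + n) := by
  have hs : Summable fun k => p k * q (m + n - k) :=
    summable_of_hasFiniteSupport <| hfp.subset fun k hk => left_ne_zero_of_mul hk
  refine hs.tsum_pos (fun k => mul_nonneg (hp k) (hq _)) m ?_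
  simpa using mul_pos hm hn

lemma exists_pos_of_conv_pos (hp : ∀ n, 0 ≤ p n) {n : ℤ}
    (h : 0 < conv p q n) : ∃ m, 0 < p m ∧ 0 < q (n - m) := by
  by_contra! H
  refine h.not_ge (tsum_nonpos fun m => ?_)
  rcases (hp m).eq_or_lt with hm | hm
  · simp [← hm]
  · exact mul_nonpos_of_nonneg_of_nonpos hm.le (H m hm)

lemma tsum_conv (hp : Summable fun n => ‖p n‖) (hq : Summable fun n => ‖q n‖) :
    ∑' n, conv p q n = (∑' n, p n) * ∑' n, q n := by
  let e : ℤ × ℤ ≃ ℤ × ℤ :=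
    (Equiv.prodComm ℤ ℤ).trans (Equiv.prodShear (Equiv.refl ℤ) Equiv.subRight)
  have hs : Summable fun x : ℤ × ℤ => p x.2 * q (x.1 - x.2) :=
    (e.summable_iff (f := fun y : ℤ × ℤ => p y.1 * q y.2)).2
      (summable_mul_of_summable_norm hp hq)
  rw [tsum_mul_tsum_of_summable_norm hp hq, ← e.tsum_eq]
  exact (hs.tsum_prod' hs.prod_factor).symm

end conv

section iterConv

variable {p : ℤ → ℝ}

lemma iterConv_nonneg (hp : ∀ n, 0 ≤ p n) (L : ℕ) (n : ℤ) : 0 ≤ iterConv p L n := by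
  induction L generalizing n with
  | zero => simp only [iterConv]; positivity
  | succ L ih => exact conv_nonneg hp ih n

lemma finite_support_iterConv (hfp : (support p).Finite) (L : ℕ) :
    (support (iterConv p L)).Finite := by
  induction L with
  | zero => exact (Set.finite_singleton 0).subset fun n hn => by_contra fun h => hn (if_neg h)
  | succ L ih => exact (hfp.add ih).subset support_conv_subset

lemma iterConv_add_pos (hp : ∀ n, 0 ≤ p n) (hfp : (support p).Finite) {L M : ℕ} {a b : ℤ}
    (ha : 0 < iterConv p L a) (hb : 0 < iterConv p M b) : 0 < iterConv p (L + M) (a + b) := by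
  induction L generalizing a with
  | zero =>
    obtain rfl : a = 0 := by_contra fun h => by simp [iterConv, h] at ha
    simpa using hb
  | succ L ih =>
    obtain ⟨m, hm, hL⟩ := exists_pos_of_conv_pos hp ha
    rw [Nat.succ_add, show a + b = m + (a - m + b) by ring]
    exact conv_pos hp (iterConv_nonneg hp _) hfp hm (ih hL)

lemma tsum_iterConv (hfp : (support p).Finite) (hsum : ∑' n, p n = 1) (L : ℕ) :
    ∑' n, iterConv p L n = 1 := by
  induction L with
  | zero => exact tsum_ite_eq (0 : ℤ) (fun _ => (1 : ℝ))
  | succ L ih =>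
    have hnorm {f : ℤ → ℝ} (hf : (support f).Finite) : Summable fun n => ‖f n‖ :=
      summable_norm_iff.2 (summable_of_hasFiniteSupport hf)
    rw [iterConv, tsum_conv (hnorm hfp) (hnorm (finite_support_iterConv hfp L)), hsum, ih, one_mul]

lemma iterConv_pos_of_mem_closure (hp : ∀ n, 0 ≤ p n) (hfp : (support p).Finite) {x : ℕ × ℤ}
    (hx : x ∈ AddSubmonoid.closure (({1} : Set ℕ) ×ˢ {m | 0 < p m})) :
    0 < iterConv p x.1 x.2 := by
  induction hx using AddSubmonoid.closure_induction with
  | mem x hx =>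
    obtain ⟨h1, hx⟩ := hx
    rw [Set.mem_singleton_iff.1 h1, ← add_zero x.2]
    exact conv_pos hp (iterConv_nonneg hp 0) hfp hx (by simp [iterConv])
  | zero => simp [iterConv]
  | add x y _ _ hx hy => exact iterConv_add_pos hp hfp hx hy

end iterConv

lemma half_tsum_abs_sub_shift_lt {q : ℤ → ℝ} (hq : ∀ n, 0 ≤ q n) (hs : Summable q) {K : ℤ}
    (hK : 0 < q K) (hK1 : 0 < q (K - 1)) :
    (1 / 2) * ∑' n, |q n - q (n + 1)| < ∑' n, q n := by
  have hs1 : Summable fun n => q (n + 1) := hs.comp_injective (add_left_injective 1)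
  have hmin : Summable fun n => min (q n) (q (n + 1)) :=
    hs.of_nonneg_of_le (fun n => le_min (hq n) (hq _)) fun n => min_le_left _ _
  have hshift : ∑' n, q (n + 1) = ∑' n, q n := (Equiv.addRight 1).tsum_eq q
  have hpos : 0 < ∑' n, min (q n) (q (n + 1)) :=
    hmin.tsum_pos (fun n => le_min (hq n) (hq _)) (K - 1) (by simpa using lt_min hK1 hK)
  have habs (n : ℤ) : |q n - q (n + 1)| = q n + q (n + 1) - 2 * min (q n) (q (n + 1)) := by
    rcases le_total (q n) (q (n + 1)) with h | h
    · rw [abs_of_nonpos (by linarith), min_eq_left h]; ring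
    · rw [abs_of_nonneg (by linarith), min_eq_right h]; ring
  rw [tsum_congr habs, (hs.add hs1).tsum_sub (hmin.mul_left 2), hs.tsum_add hs1, tsum_mul_left,
    hshift]
  linarith

lemma AddSubgroup.exists_sub_eq_of_mem_closure {G : Type*} [AddCommGroup G] {s : Set G} {x : G}
    (hx : x ∈ AddSubgroup.closure s) :
    ∃ a ∈ AddSubmonoid.closure s, ∃ b ∈ AddSubmonoid.closure s, a - b = x := by
  induction hx using AddSubgroup.closure_induction with
  | mem x hx => exact ⟨x, AddSubmonoid.subset_closure hx, 0, zero_mem _, sub_zero x⟩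
  | zero => exact ⟨0, zero_mem _, 0, zero_mem _, sub_zero 0⟩
  | add x y _ _ hx hy =>
    obtain ⟨a, ha, b, hb, rfl⟩ := hx
    obtain ⟨c, hc, d, hd, rfl⟩ := hy
    exact ⟨a + c, add_mem ha hc, b + d, add_mem hb hd, add_sub_add_comm a c b d⟩
  | neg x _ hx =>
    obtain ⟨a, ha, b, hb, rfl⟩ := hx
    exact ⟨b, hb, a, ha, (neg_sub a b).symm⟩

/-- `(L, K)` lies in this closure iff `K` is a sum of `L` elements of `S`. -/
lemma exists_consecutive_mem_closure_prod {S : Set ℤ} {c : ℤ} (hc : c ∈ S)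
    (hS : AddSubgroup.closure {m | m + c ∈ S} = ⊤) :
    ∃ L : ℕ, 0 < L ∧ ∃ K : ℤ, (L, K) ∈ AddSubmonoid.closure (({1} : Set ℕ) ×ˢ S) ∧
      (L, K - 1) ∈ AddSubmonoid.closure (({1} : Set ℕ) ×ˢ S) := by
  set M := AddSubmonoid.closure (({1} : Set ℕ) ×ˢ S)
  let φ : ℕ × ℤ →+ ℤ :=
    { toFun := fun x => x.2 - x.1 * c
      map_zero' := by simp
      map_add' := fun x y => by simp only [Prod.fst_add, Prod.snd_add]; push_cast; ring }
  have hcM : ((1 : ℕ), c) ∈ M := AddSubmonoid.subset_closure ⟨rfl, hc⟩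
  have hle : AddSubmonoid.closure {m | m + c ∈ S} ≤ M.map φ :=
    AddSubmonoid.closure_le.2 fun m hm =>
      ⟨(1, m + c), AddSubmonoid.subset_closure ⟨rfl, hm⟩, by simp [φ]⟩
  obtain ⟨a, ha, b, hb, hab⟩ :=
    AddSubgroup.exists_sub_eq_of_mem_closure (hS ▸ AddSubgroup.mem_top (1 : ℤ))
  obtain ⟨⟨La, Ka⟩, hA, rfl⟩ := hle ha
  obtain ⟨⟨Lb, Kb⟩, hB, rfl⟩ := hle hb
  -- pad both with copies of `(1, c)` to equalise the number of summands
  have hA' := add_mem hA (nsmul_mem hcM (Lb + 1))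
  have hB' := add_mem hB (nsmul_mem hcM (La + 1))
  simp only [Prod.smul_mk, smul_eq_mul, mul_one, Int.nsmul_eq_mul, Prod.mk_add_mk] at hA' hB'
  refine ⟨La + (Lb + 1), by omega, _, hA', ?_⟩
  convert hB' using 2
  · ring
  · simp only [φ, AddMonoidHom.coe_mk, ZeroHom.coe_mk] at hab
    push_cast
    linear_combination hab

theorem exists_convolution_overlapping_translate_general
    (p : ℤ → ℝ) (hpnn : ∀ n, 0 ≤ p n)
    (hfin : (Function.support p).Finite)
    (hsum : ∑' n, p n = 1)
    (nmin : ℤ) (hnmin : 0 < p nmin)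
    (hgcd : AddSubgroup.closure {m : ℤ | 0 < p (m + nmin)} = ⊤) :
    ∃ L : ℕ, 0 < L ∧ ∃ K : ℤ,
      0 < iterConv p L K ∧ 0 < iterConv p L (K - 1) ∧
        (1 / 2) * ∑' n : ℤ, |iterConv p L n - iterConv p L (n + 1)| < 1 := by
  obtain ⟨L, hL, K, hK, hK1⟩ :=
    exists_consecutive_mem_closure_prod (S := {m | 0 < p m}) hnmin hgcd
  have hposK := iterConv_pos_of_mem_closure hpnn hfin hK
  have hposK1 := iterConv_pos_of_mem_closure hpnn hfin hK1
  refine ⟨L, hL, K, hposK, hposK1, ?_⟩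
  have htv := half_tsum_abs_sub_shift_lt (iterConv_nonneg hpnn L)
    (summable_of_hasFiniteSupport (finite_support_iterConv hfin L)) hposK hposK1
  rwa [tsum_iterConv hfin hsum L] at htv

/-- If a finitely supported probability distribution p on ℤ with minimal
support point n_min satisfies gcd{n − n_min : p(n) > 0} = 1 (i.e. the shifted
support generates ℤ), then some L-fold convolution of p charges two
consecutive integers, and hence lies at total-variation distance < 1 from its
unit translate. -/
theorem exists_convolution_overlapping_translate
    (p : ℤ → ℝ) (hpnn : ∀ n, 0 ≤ p n)
    (hfin : (Function.support p).Finite)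
    (hsum : ∑' n, p n = 1)
    (nmin : ℤ) (hnmin : 0 < p nmin) (hmin : ∀ n, 0 < p n → nmin ≤ n)
    (hgcd : AddSubgroup.closure {m : ℤ | 0 < p (m + nmin)} = ⊤) :
    ∃ L : ℕ, 0 < L ∧ ∃ K : ℤ,
      0 < iterConv p L K ∧ 0 < iterConv p L (K - 1) ∧
        (1 / 2) * ∑' n : ℤ, |iterConv p L n - iterConv p L (n + 1)| < 1 :=
  exists_convolution_overlapping_translate_general p hpnn hfin hsum nmin hnmin hgcd
end
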